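/- arXiv:2202.04157 — 9 statements merged into one kernel-verified Lean document; each statement's English description precedes it below -/
import Mathlib

section
/- Let P be an irreducible aperiodic stochastic matrix on a finite state space X and C : X → ℝ a cost function. For any α > 0, the limit lim_{n→∞} (1/n) ln E_x[exp(α ∑_{i=0}^{n-1} C(Φ_i))] exists, is independent of the initial state x, and equals ln λ̂₁ where λ̂₁ is the largest (Perron) eigenvalue of the nonnegative matrix P̂ = diag(e^{αC}) P. -/
open Matrix Filter Topology

/-- A (row-)stochastic matrix on a finite state space. -/
def StochasticMat {X : Type*} [Fintype X] (P : Matrix X X ℝ) : Prop :=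
  (∀ x y, 0 ≤ P x y) ∧ ∀ x, ∑ y, P x y = 1

/-- A primitive nonnegative matrix: some power has all entries strictly positive.
For finite stochastic matrices this is equivalent to irreducibility together with
aperiodicity. -/
def PrimitiveMat {X : Type*} [Fintype X] [DecidableEq X] (P : Matrix X X ℝ) : Prop :=
  ∃ n : ℕ, 0 < n ∧ ∀ x y, 0 < (P ^ n) x y

/-- `finExp P f x n = E_x[ exp (∑_{i=0}^{n-1} f(Φ_i)) ]` for the Markov chain with
transition matrix `P` started at `Φ_0 = x`, written as an explicit sum over the
paths `(Φ_1, …, Φ_n)`. -/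
noncomputable def finExp {X : Type*} [Fintype X] (P : Matrix X X ℝ) (f : X → ℝ)
    (x : X) (n : ℕ) : ℝ :=
  ∑ w : Fin n → X,
    (∏ i : Fin n, P ((Fin.cons x w : Fin (n+1) → X) i.castSucc) ((Fin.cons x w : Fin (n+1) → X) i.succ)) *
      Real.exp (∑ i : Fin n, f ((Fin.cons x w : Fin (n+1) → X) i.castSucc))

lemma pathSum {X : Type*} [Fintype X] [DecidableEq X] (M : Matrix X X ℝ) :
    ∀ (n : ℕ) (x : X),
      (∑ w : Fin n → X, ∏ i : Fin n,
        M ((Fin.cons x w : Fin (n+1) → X) i.castSucc) ((Fin.cons x w : Fin (n+1) → X) i.succ))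
        = ((M ^ n) *ᵥ fun _ => (1:ℝ)) x := by
  intro n
  induction n with
  | zero => intro x; simp [pow_zero, Matrix.one_mulVec]
  | succ n ih =>
      intro x
      rw [← (Fin.consEquiv fun _ : Fin (n+1) => X).sum_comp
        (fun w : Fin (n+1) → X => ∏ i : Fin (n+1),
          M ((Fin.cons x w : Fin (n+2) → X) i.castSucc) ((Fin.cons x w : Fin (n+2) → X) i.succ))]
      rw [Fintype.sum_prod_type]
      have key : ∀ (y : X) (w : Fin n → X),
          (∏ i : Fin (n+1),
            M ((Fin.cons x (Fin.cons y w) : Fin (n+2) → X) i.castSucc)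
              ((Fin.cons x (Fin.cons y w) : Fin (n+2) → X) i.succ))
          = M x y * ∏ i : Fin n,
              M ((Fin.cons y w : Fin (n+1) → X) i.castSucc) ((Fin.cons y w : Fin (n+1) → X) i.succ) := by
        intro y w
        rw [Fin.prod_univ_succ]
        congr 1
      have key2 : ∀ p : X × (Fin n → X),
          (∏ i : Fin (n+1),
            M ((Fin.cons x ((Fin.consEquiv fun _ => X) p) : Fin (n+2) → X) i.castSucc)
              ((Fin.cons x ((Fin.consEquiv fun _ => X) p) : Fin (n+2) → X) i.succ))
          = M x p.1 * ∏ i : Fin n,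
              M ((Fin.cons p.1 p.2 : Fin (n+1) → X) i.castSucc) ((Fin.cons p.1 p.2 : Fin (n+1) → X) i.succ) := by
        intro p; exact key p.1 p.2
      simp only [key2]
      rw [pow_succ']
      rw [← mulVec_mulVec]
      simp_rw [← Finset.mul_sum, ih]
      rfl


lemma finExp_eq {X : Type*} [Fintype X] [DecidableEq X] (P : Matrix X X ℝ) (f : X → ℝ)
    (x : X) (n : ℕ) :
    finExp P f x n = (((Matrix.of fun a b => Real.exp (f a) * P a b) ^ n) *ᵥ fun _ => (1:ℝ)) x := by
  rw [← pathSum]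
  unfold finExp
  apply Finset.sum_congr rfl
  intro w _
  rw [Real.exp_sum, mul_comm, ← Finset.prod_mul_distrib]
  apply Finset.prod_congr rfl
  intro i _
  simp [Matrix.of_apply, mul_comm]

/-- For an irreducible aperiodic stochastic matrix `P` on a finite state
space, a cost `C` and risk factor `α > 0`, the limit
`lim_n (1/n) ln E_x[exp (α ∑_{i<n} C(Φ_i))]` exists, is independent of the initial state
`x`, and equals `ln λ̂₁`, where `λ̂₁` is the Perron eigenvalue of
`P̂ = diag (e^{αC}) P` (characterized, via Perron–Frobenius for the primitive matrix `P̂`,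
as the eigenvalue admitting a strictly positive right eigenvector). -/
theorem statement0 {X : Type*} [Fintype X] [DecidableEq X] [Nonempty X]
    (P : Matrix X X ℝ) (hP : StochasticMat P) (hprim : PrimitiveMat P)
    (C : X → ℝ) (α : ℝ) (hα : 0 < α)
    (lam : ℝ) (h : X → ℝ) (hpos : ∀ x, 0 < h x)
    (heig : (Matrix.of fun x y => Real.exp (α * C x) * P x y) *ᵥ h = lam • h) :
    ∀ x : X,
      Tendsto (fun n : ℕ => Real.log (finExp P (fun y => α * C y) x n) / n)
        atTop (𝓝 (Real.log lam)) := by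
  obtain ⟨hP1, hP2⟩ := hP
  set M : Matrix X X ℝ := Matrix.of fun x y => Real.exp (α * C x) * P x y with hMdef
  have hMnn : ∀ a b, 0 ≤ M a b := fun a b =>
    mul_nonneg (Real.exp_pos _).le (hP1 a b)
  have heig' : ∀ x, ∑ y, M x y * h y = lam * h x := by
    intro x
    have := congrFun heig x
    simpa [Matrix.mulVec, dotProduct] using this
  -- lam is positive
  have hlam : 0 < lam := by
    obtain ⟨x₀⟩ := ‹Nonempty X›
    obtain ⟨y₀, hy₀⟩ : ∃ y, 0 < P x₀ y := by
      by_contra hc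
      push_neg at hc
      have hz : ∀ y, P x₀ y = 0 := fun y => le_antisymm (hc y) (hP1 x₀ y)
      have h1 := hP2 x₀
      rw [Finset.sum_eq_zero (fun y _ => hz y)] at h1
      norm_num at h1
    have hsum : 0 < ∑ y, M x₀ y * h y := by
      have hpos0 : 0 < M x₀ y₀ * h y₀ :=
        mul_pos (mul_pos (Real.exp_pos _) hy₀) (hpos y₀)
      refine lt_of_lt_of_le hpos0 ?_
      refine Finset.single_le_sum (f := fun y => M x₀ y * h y) ?_ (Finset.mem_univ y₀)
      exact fun y _ => mul_nonneg (hMnn x₀ y) (hpos y).le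
    rw [heig' x₀] at hsum
    nlinarith [hpos x₀]
  -- extremes of h
  obtain ⟨xM, hxM⟩ := Finite.exists_max h
  obtain ⟨xm, hxm⟩ := Finite.exists_min h
  set A := h xM with hA
  set B := h xm with hB
  have hA0 : 0 < A := hpos xM
  have hB0 : 0 < B := hpos xm
  -- key sandwich
  have key : ∀ (n : ℕ) (x : X),
      lam ^ n * h x / A ≤ ((M ^ n) *ᵥ fun _ => (1:ℝ)) x ∧
      ((M ^ n) *ᵥ fun _ => (1:ℝ)) x ≤ lam ^ n * h x / B := by
    intro n
    induction n with
    | zero =>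
        intro x
        simp only [pow_zero, Matrix.one_mulVec, one_mul]
        constructor
        · exact (div_le_one hA0).mpr (hxM x)
        · exact (one_le_div hB0).mpr (hxm x)
    | succ n ih =>
        intro x
        rw [show M ^ (n+1) = M * M ^ n from pow_succ' M n, ← Matrix.mulVec_mulVec]
        have hexp : ((M *ᵥ ((M ^ n) *ᵥ fun _ => (1:ℝ)))) x
            = ∑ y, M x y * ((M ^ n) *ᵥ fun _ => (1:ℝ)) y := rfl
        rw [hexp]
        constructor
        · have hle : ∑ y, M x y * (lam ^ n * h y / A)
              ≤ ∑ y, M x y * ((M ^ n) *ᵥ fun _ => (1:ℝ)) y := by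
            refine Finset.sum_le_sum fun y _ => ?_
            exact mul_le_mul_of_nonneg_left (ih y).1 (hMnn x y)
          refine le_trans (le_of_eq ?_) hle
          have : ∑ y, M x y * (lam ^ n * h y / A)
              = (lam ^ n / A) * ∑ y, M x y * h y := by
            rw [Finset.mul_sum]; apply Finset.sum_congr rfl; intro y _; ring
          rw [this, heig' x]; ring
        · have hle : ∑ y, M x y * ((M ^ n) *ᵥ fun _ => (1:ℝ)) y
              ≤ ∑ y, M x y * (lam ^ n * h y / B) := by
            refine Finset.sum_le_sum fun y _ => ?_
            exact mul_le_mul_of_nonneg_left (ih y).2 (hMnn x y)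
          refine le_trans hle (le_of_eq ?_)
          have : ∑ y, M x y * (lam ^ n * h y / B)
              = (lam ^ n / B) * ∑ y, M x y * h y := by
            rw [Finset.mul_sum]; apply Finset.sum_congr rfl; intro y _; ring
          rw [this, heig' x]; ring
  intro x
  have hhx : 0 < h x := hpos x
  have hfe : ∀ n, finExp P (fun y => α * C y) x n = ((M ^ n) *ᵥ fun _ => (1:ℝ)) x := by
    intro n; rw [finExp_eq]
  have hfpos : ∀ n : ℕ, 0 < finExp P (fun y => α * C y) x n := by
    intro n
    rw [hfe n]
    have := (key n x).1
    have hp : 0 < lam ^ n * h x / A := by positivity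
    linarith
  -- squeeze
  have haux : ∀ c : ℝ, Tendsto (fun n : ℕ => ((n : ℝ) * Real.log lam + c) / n)
      atTop (𝓝 (Real.log lam)) := by
    intro c
    have h1 : Tendsto (fun n : ℕ => Real.log lam + c / n) atTop (𝓝 (Real.log lam + 0)) :=
      tendsto_const_nhds.add (tendsto_const_div_atTop_nhds_zero_nat c)
    rw [add_zero] at h1
    refine h1.congr' ?_
    filter_upwards [eventually_gt_atTop 0] with n hn
    have hn' : (n : ℝ) ≠ 0 := Nat.cast_ne_zero.mpr hn.ne'
    field_simp
  refine tendsto_of_tendsto_of_tendsto_of_le_of_le' (haux (Real.log (h x / A)))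
    (haux (Real.log (h x / B))) ?_ ?_
  · filter_upwards [eventually_gt_atTop 0] with n hn
    have hn0 : (0:ℝ) < n := Nat.cast_pos.mpr hn
    have hb : lam ^ n * h x / A ≤ finExp P (fun y => α * C y) x n := by
      rw [hfe n]; exact (key n x).1
    have hlog : (n : ℝ) * Real.log lam + Real.log (h x / A)
        ≤ Real.log (finExp P (fun y => α * C y) x n) := by
      have hp : 0 < lam ^ n * h x / A := by positivity
      have := Real.log_le_log hp hb
      calc (n : ℝ) * Real.log lam + Real.log (h x / A)
          = Real.log (lam ^ n * (h x / A)) := by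
            rw [Real.log_mul (by positivity) (by positivity), Real.log_pow]
        _ = Real.log (lam ^ n * h x / A) := by rw [mul_div_assoc]
        _ ≤ _ := this
    exact div_le_div_of_nonneg_right hlog hn0.le
  · filter_upwards [eventually_gt_atTop 0] with n hn
    have hn0 : (0:ℝ) < n := Nat.cast_pos.mpr hn
    have hb : finExp P (fun y => α * C y) x n ≤ lam ^ n * h x / B := by
      rw [hfe n]; exact (key n x).2
    have hlog : Real.log (finExp P (fun y => α * C y) x n)
        ≤ (n : ℝ) * Real.log lam + Real.log (h x / B) := by
      have := Real.log_le_log (hfpos n) hb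
      calc Real.log (finExp P (fun y => α * C y) x n)
          ≤ Real.log (lam ^ n * h x / B) := this
        _ = Real.log (lam ^ n * (h x / B)) := by rw [mul_div_assoc]
        _ = (n : ℝ) * Real.log lam + Real.log (h x / B) := by
            rw [Real.log_mul (by positivity) (by positivity), Real.log_pow]
    exact div_le_div_of_nonneg_right hlog hn0.le
end

section
/- Let x* be a recurrent state of the irreducible aperiodic finite Markov chain with transition matrix P, and τ_{x*} = inf{i ≥ 1 : Φ_i = x*} the first return time. Then Λ(α) is the unique real solution Λ of the fixed-point equation E_{x*}[exp(∑_{i=0}^{τ_{x*}−1} (α C(Φ_i) − Λ))] = 1. -/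
/-!
Twisting `Q = diag (e^{αC}) P` by its positive eigenvector `h` gives the stochastic matrix
`M x y = Q x y * h y / (λ * h x)` (Doob's h-transform), which has the same positive entries as `P`
and is therefore still primitive. Along an excursion from `xs` back to `xs` the factors of `h`
telescope, so its `P`-weight times `exp ∑ (α C - L)` equals `(λ e^{-L})^{k+1}` times its
`M`-weight, `k + 1` being its length. The left side of the fixed-point equation is therefore
`∑ₖ t^{k+1} fₖ` with `t = λ e^{-L}` and `f` the first-return distribution of `M`. That
distribution has total mass `1`, because a primitive chain avoids `xs` for `n` steps with
probability decaying geometrically in `n`; so the series is `1` at `t = 1`, at most `t` for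
`t < 1` and at least `t` for `t > 1`.
-/

open Matrix Filter Topology

/-- `retE P xs x F = E_x[ F τ (Φ_0, …, Φ_τ) ]` where `τ = inf {i ≥ 1 : Φ_i = xs}` is the
first return/hitting time of `xs`, written as a sum over the return time `τ = k+1` and the
intermediate states `(Φ_1, …, Φ_k)` (all ≠ `xs`); the path fed to `F` is
`(x, Φ_1, …, Φ_k, xs) : Fin (k+2) → X`.  In particular, taking
`F k p = exp (∑_{i=0}^{k} f (p i))` gives `E_x[exp (∑_{i=0}^{τ-1} f(Φ_i))]`, and
`F k p = (k+1)` gives `E_x[τ]`. -/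
noncomputable def retE {X : Type*} [Fintype X] [DecidableEq X] (P : Matrix X X ℝ)
    (xs x : X) (F : (k : ℕ) → (Fin (k + 2) → X) → ℝ) : ℝ :=
  ∑' k : ℕ, ∑ w : Fin k → X,
    if ∀ i, w i ≠ xs then
      (∏ i : Fin (k + 1),
          P ((Fin.snoc (Fin.cons x w) xs : Fin (k+2) → X) i.castSucc) ((Fin.snoc (Fin.cons x w) xs : Fin (k+2) → X) i.succ)) *
        F k (Fin.snoc (Fin.cons x w) xs : Fin (k+2) → X)
    else 0

open Finset Real

section NonnegMatrix

variable {n R : Type*} [Fintype n] [Semiring R] [PartialOrder R] [IsOrderedRing R]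

lemma Matrix.mulVec_mono_of_nonneg {m : Type*} {A : Matrix m n R} (hA : ∀ i j, 0 ≤ A i j) {v w : n → R}
    (hvw : v ≤ w) : A *ᵥ v ≤ A *ᵥ w :=
  fun i => sum_le_sum fun j _ => mul_le_mul_of_nonneg_left (hvw j) (hA i j)

lemma Matrix.pos_of_mulVec_eq_smul {Q : Matrix n n ℝ} (hQ : ∀ i j, 0 ≤ Q i j) {h : n → ℝ}
    (hpos : ∀ i, 0 < h i) {lam : ℝ} (heig : Q *ᵥ h = lam • h) {i j : n} (hij : 0 < Q i j) :
    0 < lam := by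
  have hi := congrFun heig i
  simp only [mulVec, dotProduct, Pi.smul_apply, smul_eq_mul] at hi
  have : 0 < lam * h i := hi ▸ sum_pos' (fun l _ => mul_nonneg (hQ i l) (hpos l).le)
    ⟨j, mem_univ j, mul_pos hij (hpos j)⟩
  exact (mul_pos_iff_of_pos_right (hpos i)).1 this

variable [DecidableEq n]

lemma Matrix.pow_apply_le_pow_apply {A B : Matrix n n R} (hA : ∀ i j, 0 ≤ A i j)
    (hAB : ∀ i j, A i j ≤ B i j) (k : ℕ) (i j : n) : (A ^ k) i j ≤ (B ^ k) i j := by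
  induction k generalizing j with
  | zero => rfl
  | succ k ih =>
    simp only [pow_succ, mul_apply]
    exact sum_le_sum fun l _ => mul_le_mul (ih l) (hAB l j) (hA l j)
      ((pow_apply_nonneg hA k i l).trans (ih l))

lemma Matrix.tendsto_pow_mulVec_one_nhds_zero {T : Matrix n n ℝ} (hT : ∀ i j, 0 ≤ T i j)
    (hT1 : T *ᵥ 1 ≤ 1) {m : ℕ} (hm : 0 < m) {b : ℝ} (hb0 : 0 ≤ b) (hb : b < 1)
    (hTm : T ^ m *ᵥ 1 ≤ b • 1) (i : n) :
    Tendsto (fun k => (T ^ k *ᵥ 1) i) atTop (𝓝 0) := by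
  have hmono : ∀ k {v w : n → ℝ}, v ≤ w → T ^ k *ᵥ v ≤ T ^ k *ᵥ w := fun k _ _ =>
    mulVec_mono_of_nonneg (pow_apply_nonneg hT k)
  have hanti : Antitone fun k => T ^ k *ᵥ 1 := antitone_nat_of_succ_le fun k => by
    rw [pow_succ, ← mulVec_mulVec]
    exact hmono k hT1
  have hgeom : ∀ j, T ^ (j * m) *ᵥ 1 ≤ b ^ j • 1 := by
    intro j
    induction j with
    | zero => simp
    | succ j ih =>
      calc T ^ ((j + 1) * m) *ᵥ 1 = T ^ (j * m) *ᵥ (T ^ m *ᵥ 1) := by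
            rw [mulVec_mulVec, ← pow_add, add_one_mul]
        _ ≤ T ^ (j * m) *ᵥ (b • 1) := hmono _ hTm
        _ = b • (T ^ (j * m) *ᵥ 1) := mulVec_smul ..
        _ ≤ b • (b ^ j • 1) := smul_le_smul_of_nonneg_left ih hb0
        _ = b ^ (j + 1) • 1 := by rw [smul_smul, pow_succ']
  refine squeeze_zero (fun k => ?_) (fun k => ?_)
    ((tendsto_pow_atTop_nhds_zero_of_lt_one hb0 hb).comp (Nat.tendsto_div_const_atTop hm.ne'))
  · exact sum_nonneg fun j _ => mul_nonneg (pow_apply_nonneg hT k i j) zero_le_one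
  · calc (T ^ k *ᵥ 1) i ≤ (T ^ (k / m * m) *ᵥ 1) i := hanti (Nat.div_mul_le_self k m) i
      _ ≤ b ^ (k / m) := by simpa using hgeom (k / m) i

lemma PrimitiveMat.of_pos_iff {A B : Matrix n n ℝ} (hA : ∀ i j, 0 ≤ A i j)
    (hB : ∀ i j, 0 ≤ B i j) (hAB : ∀ i j, 0 < A i j ↔ 0 < B i j) (hprim : PrimitiveMat A) :
    PrimitiveMat B := by
  have hq : toQuiver A = toQuiver B := by
    unfold toQuiver
    simp_rw [hAB]
  obtain ⟨k, hk, hpos⟩ := hprim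
  refine ⟨k, hk, fun i j => ?_⟩
  have := (pow_apply_pos_iff_nonempty_path hA k i j).1 (hpos i j)
  exact (pow_apply_pos_iff_nonempty_path hB k i j).2 (hq ▸ this)

end NonnegMatrix

lemma eq_one_of_tsum_pow_succ_mul_eq_one {f : ℕ → ℝ} (hf0 : ∀ k, 0 ≤ f k) (hf : HasSum f 1)
    {t : ℝ} (ht : 0 ≤ t) (h : ∑' k, t ^ (k + 1) * f k = 1) : t = 1 := by
  have htf : HasSum (fun k => t * f k) t := by simpa using hf.mul_left t
  rcases lt_trichotomy t 1 with ht1 | rfl | ht1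
  · have hle : ∀ k, t ^ (k + 1) * f k ≤ t * f k := fun k =>
      mul_le_mul_of_nonneg_right (pow_le_of_le_one ht ht1.le k.succ_ne_zero) (hf0 k)
    have hs := Summable.of_nonneg_of_le (fun k => mul_nonneg (pow_nonneg ht _) (hf0 k)) hle
      htf.summable
    linarith [h ▸ htf.tsum_eq ▸ hs.tsum_le_tsum hle htf.summable]
  · rfl
  · have hle : ∀ k, t * f k ≤ t ^ (k + 1) * f k := fun k =>
      mul_le_mul_of_nonneg_right (le_self_pow₀ ht1.le k.succ_ne_zero) (hf0 k)
    by_cases hs : Summable fun k => t ^ (k + 1) * f k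
    · linarith [h ▸ htf.tsum_eq ▸ htf.summable.tsum_le_tsum hle hs]
    · rw [tsum_eq_zero_of_not_summable hs] at h
      exact absurd h zero_ne_one

namespace FirstReturn

variable {X : Type*}

def pathWeight (M : Matrix X X ℝ) {k : ℕ} (p : Fin (k + 1) → X) : ℝ :=
  ∏ i : Fin k, M (p i.castSucc) (p i.succ)

lemma pathWeight_cons (M : Matrix X X ℝ) {k : ℕ} (x : X) (p : Fin (k + 1) → X) :
    pathWeight M (Fin.cons x p : Fin (k + 2) → X) = M x (p 0) * pathWeight M p := by
  simp only [pathWeight, Fin.prod_univ_succ, Fin.castSucc_zero, Fin.cons_zero,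
    ← Fin.succ_castSucc, Fin.cons_succ]

def returnPath (xs x : X) {k : ℕ} (w : Fin k → X) : Fin (k + 2) → X :=
  Fin.snoc (Fin.cons x w) xs

lemma returnPath_zero (xs x : X) {k : ℕ} (w : Fin k → X) : returnPath xs x w 0 = x := by
  rw [← Fin.castSucc_zero, returnPath, Fin.snoc_castSucc, Fin.cons_zero]

lemma returnPath_last (xs x : X) {k : ℕ} (w : Fin k → X) :
    returnPath xs x w (Fin.last (k + 1)) = xs :=
  Fin.snoc_last _ _

lemma returnPath_cons (xs x y : X) {k : ℕ} (w : Fin k → X) :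
    returnPath xs x (Fin.cons y w) = Fin.cons x (returnPath xs y w) :=
  (Fin.cons_snoc_eq_snoc_cons x (Fin.cons y w) xs).symm

noncomputable def hTransform (Q : Matrix X X ℝ) (lam : ℝ) (h : X → ℝ) : Matrix X X ℝ :=
  of fun x y => Q x y * h y / (lam * h x)

lemma hTransform_stochastic [Fintype X] {Q : Matrix X X ℝ} (hQ : ∀ x y, 0 ≤ Q x y) {lam : ℝ}
    (hlam : 0 < lam) {h : X → ℝ} (hpos : ∀ x, 0 < h x) (heig : Q *ᵥ h = lam • h) :
    StochasticMat (hTransform Q lam h) := by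
  refine ⟨fun x y => div_nonneg (mul_nonneg (hQ x y) (hpos y).le) (mul_pos hlam (hpos x)).le,
    fun x => ?_⟩
  have hx := congrFun heig x
  simp only [mulVec, dotProduct, Pi.smul_apply, smul_eq_mul] at hx
  simp only [hTransform, of_apply, ← sum_div, hx]
  exact div_self (mul_pos hlam (hpos x)).ne'

lemma hTransform_pos_iff {Q : Matrix X X ℝ} {lam : ℝ} (hlam : 0 < lam) {h : X → ℝ}
    (hpos : ∀ x, 0 < h x) (x y : X) : 0 < hTransform Q lam h x y ↔ 0 < Q x y := by
  simp only [hTransform, of_apply, div_pos_iff_of_pos_right (mul_pos hlam (hpos x)),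
    mul_pos_iff_of_pos_right (hpos y)]

lemma pathWeight_of_exp_mul (P : Matrix X X ℝ) (g : X → ℝ) {k : ℕ} (p : Fin (k + 1) → X) :
    pathWeight (of fun x y => exp (g x) * P x y) p =
      exp (∑ i : Fin k, g (p i.castSucc)) * pathWeight P p := by
  simp [pathWeight, prod_mul_distrib, exp_sum]

lemma pathWeight_hTransform (Q : Matrix X X ℝ) {lam : ℝ} (hlam : lam ≠ 0) {h : X → ℝ}
    (hh : ∀ x, h x ≠ 0) {k : ℕ} (p : Fin (k + 1) → X) :
    pathWeight (hTransform Q lam h) p * (lam ^ k * h (p 0)) =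
      pathWeight Q p * h (p (Fin.last k)) := by
  have htel : h (p 0) * ∏ i : Fin k, h (p i.succ) =
      (∏ i : Fin k, h (p i.castSucc)) * h (p (Fin.last k)) := by
    rw [← Fin.prod_univ_succ (fun i => h (p i)), Fin.prod_univ_castSucc]
  have hprod : ∏ i : Fin k, h (p i.castSucc) ≠ 0 := prod_ne_zero_iff.2 fun i _ => hh _
  simp only [pathWeight, hTransform, of_apply, prod_div_distrib, prod_mul_distrib,
    prod_const, card_univ, Fintype.card_fin]
  field_simp
  linear_combination (∏ i : Fin k, Q (p i.castSucc) (p i.succ)) * htel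

lemma pathWeight_mul_exp_sum_sub_eq (P : Matrix X X ℝ) (g : X → ℝ) {lam : ℝ} (hlam : 0 < lam)
    {h : X → ℝ} (hpos : ∀ x, 0 < h x) (L : ℝ) {k : ℕ} (p : Fin (k + 1) → X)
    (hp : p 0 = p (Fin.last k)) :
    pathWeight P p * exp (∑ i : Fin k, (g (p i.castSucc) - L)) =
      exp (log lam - L) ^ k *
        pathWeight (hTransform (of fun x y => exp (g x) * P x y) lam h) p := by
  have key := pathWeight_hTransform (of fun x y => exp (g x) * P x y) hlam.ne'
    (fun x => (hpos x).ne') p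
  rw [pathWeight_of_exp_mul, ← hp] at key
  have hcancel : pathWeight (hTransform (of fun x y => exp (g x) * P x y) lam h) p *
      lam ^ k = exp (∑ i : Fin k, g (p i.castSucc)) * pathWeight P p :=
    mul_right_cancel₀ (hpos (p 0)).ne' (by linear_combination key)
  rw [sum_sub_distrib, exp_sub, sum_const, card_univ, Fintype.card_fin, exp_sub, exp_log hlam,
    div_pow, nsmul_eq_mul, exp_nat_mul]
  field_simp
  linear_combination -hcancel

variable [DecidableEq X]

def taboo (M : Matrix X X ℝ) (xs : X) : Matrix X X ℝ :=
  of fun x y => if y = xs then 0 else M x y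

lemma taboo_nonneg {M : Matrix X X ℝ} (hM : ∀ x y, 0 ≤ M x y) (xs : X) (x y : X) :
    0 ≤ taboo M xs x y := by
  simp only [taboo, of_apply]; split_ifs <;> simp_all

lemma taboo_le {M : Matrix X X ℝ} (hM : ∀ x y, 0 ≤ M x y) (xs : X) (x y : X) :
    taboo M xs x y ≤ M x y := by
  simp only [taboo, of_apply]; split_ifs <;> simp_all

variable [Fintype X]

/-- `firstPassage M xs k x` is the probability that the chain started at `x` first visits `xs`
at time `k + 1`. -/
def firstPassage (M : Matrix X X ℝ) (xs : X) (k : ℕ) (x : X) : ℝ :=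
  ∑ w : Fin k → X, if ∀ i, w i ≠ xs then pathWeight M (returnPath xs x w) else 0

lemma firstPassage_zero (M : Matrix X X ℝ) (xs : X) : firstPassage M xs 0 = fun x => M x xs := by
  ext x
  rw [firstPassage, Fintype.sum_unique, if_pos finZeroElim, pathWeight, Fin.prod_univ_one]
  exact congrArg₂ M (returnPath_zero ..) (returnPath_last ..)

lemma firstPassage_succ (M : Matrix X X ℝ) (xs : X) (k : ℕ) :
    firstPassage M xs (k + 1) = taboo M xs *ᵥ firstPassage M xs k := by
  ext x
  simp only [firstPassage, mulVec, dotProduct, taboo, of_apply, mul_sum]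
  rw [← (Fin.consEquiv fun _ => X).sum_comp, Fintype.sum_prod_type]
  refine sum_congr rfl fun y _ => sum_congr rfl fun w _ => ?_
  change (if ∀ i, (Fin.cons y w : Fin (k + 1) → X) i ≠ xs then
    pathWeight M (returnPath xs x (Fin.cons y w)) else 0) = _
  rw [returnPath_cons, pathWeight_cons, returnPath_zero]
  simp only [Fin.forall_fin_succ, Fin.cons_zero, Fin.cons_succ]
  split_ifs <;> simp_all

lemma firstPassage_eq (M : Matrix X X ℝ) (xs : X) (k : ℕ) :
    firstPassage M xs k = taboo M xs ^ k *ᵥ fun x => M x xs := by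
  induction k with
  | zero => simp [firstPassage_zero]
  | succ k ih => rw [firstPassage_succ, ih, pow_succ', mulVec_mulVec]

lemma taboo_mulVec_one_add {M : Matrix X X ℝ} (hM : StochasticMat M) (xs : X) :
    taboo M xs *ᵥ 1 + (fun x => M x xs) = 1 := by
  ext x
  have hrow : ∑ y, taboo M xs x y = ∑ y ∈ univ.erase xs, M x y := by
    rw [← sum_erase univ (f := taboo M xs x) (a := xs) (by simp [taboo])]
    exact sum_congr rfl fun y hy => if_neg (ne_of_mem_erase hy)
  simp only [Pi.add_apply, mulVec, dotProduct, Pi.one_apply, mul_one, hrow,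
    sum_erase_add _ _ (mem_univ xs), hM.2 x]

lemma taboo_mulVec_one_le {M : Matrix X X ℝ} (hM : StochasticMat M) (xs : X) :
    taboo M xs *ᵥ 1 ≤ 1 := fun x => by
  have := congrFun (taboo_mulVec_one_add hM xs) x
  simp only [Pi.add_apply, Pi.one_apply] at this ⊢
  linarith [hM.1 x xs]

lemma taboo_pow_succ_mulVec_one_le {M : Matrix X X ℝ} (hM : StochasticMat M) (xs : X)
    (n : ℕ) (x : X) : (taboo M xs ^ (n + 1) *ᵥ 1) x ≤ 1 - (M ^ (n + 1)) x xs := by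
  have hzero : (taboo M xs ^ (n + 1)) x xs = 0 := by
    simp [pow_succ, mul_apply, taboo]
  have hrow := sum_row_of_mem_rowStochastic
    (pow_mem (mem_rowStochastic_iff_sum.2 hM) (n + 1)) x
  calc (taboo M xs ^ (n + 1) *ᵥ 1) x = ∑ y ∈ univ.erase xs, (taboo M xs ^ (n + 1)) x y := by
        simp [mulVec, dotProduct, sum_erase _ hzero]
    _ ≤ ∑ y ∈ univ.erase xs, (M ^ (n + 1)) x y := sum_le_sum fun y _ =>
        pow_apply_le_pow_apply (taboo_nonneg hM.1 xs) (taboo_le hM.1 xs) _ x y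
    _ = 1 - (M ^ (n + 1)) x xs := by rw [sum_erase_eq_sub (mem_univ xs), hrow]

lemma sum_range_firstPassage {M : Matrix X X ℝ} (hM : StochasticMat M) (xs : X) (n : ℕ) :
    ∑ k ∈ range n, firstPassage M xs k = 1 - taboo M xs ^ n *ᵥ 1 := by
  have hcol : (fun x => M x xs) = 1 - taboo M xs *ᵥ 1 :=
    eq_sub_of_add_eq' (taboo_mulVec_one_add hM xs)
  simp_rw [firstPassage_eq, hcol, mulVec_sub, mulVec_mulVec, ← pow_succ]
  rw [sum_range_sub', pow_zero, one_mulVec]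

lemma firstPassage_nonneg {M : Matrix X X ℝ} (hM : ∀ x y, 0 ≤ M x y) (xs : X) (k : ℕ) :
    0 ≤ firstPassage M xs k xs := by
  rw [firstPassage_eq]
  exact sum_nonneg fun y _ => mul_nonneg (pow_apply_nonneg (taboo_nonneg hM xs) k xs y) (hM y xs)

lemma hasSum_firstPassage {M : Matrix X X ℝ} (hM : StochasticMat M) (hprim : PrimitiveMat M)
    (xs : X) : HasSum (fun k => firstPassage M xs k xs) 1 := by
  have : Nonempty X := ⟨xs⟩
  obtain ⟨m, hm, hpos⟩ := hprim
  obtain ⟨x₀, hx₀⟩ := Finite.exists_min fun x => (M ^ m) x xs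
  have hTm : taboo M xs ^ m *ᵥ 1 ≤ (1 - (M ^ m) x₀ xs) • 1 := fun x => by
    obtain ⟨n, rfl⟩ : ∃ n, m = n + 1 := ⟨m - 1, by omega⟩
    simpa using (taboo_pow_succ_mulVec_one_le hM xs n x).trans (by linarith [hx₀ x])
  have hdecay := tendsto_pow_mulVec_one_nhds_zero (taboo_nonneg hM.1 xs)
    (taboo_mulVec_one_le hM xs) hm
    (sub_nonneg.2 (le_one_of_mem_rowStochastic (pow_mem (mem_rowStochastic_iff_sum.2 hM) m)))
    (sub_lt_self _ (hpos x₀ xs)) hTm xs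
  rw [hasSum_iff_tendsto_nat_of_nonneg (firstPassage_nonneg hM.1 xs)]
  simpa [← Finset.sum_apply, sum_range_firstPassage hM] using hdecay.const_sub 1

lemma retE_exp_sum_sub_eq_tsum (P : Matrix X X ℝ) (g : X → ℝ) {lam : ℝ} (hlam : 0 < lam)
    {h : X → ℝ} (hpos : ∀ x, 0 < h x) (xs : X) (L : ℝ) :
    retE P xs xs (fun k p => exp (∑ i : Fin (k + 1), (g (p i.castSucc) - L))) =
      ∑' k, exp (log lam - L) ^ (k + 1) *
        firstPassage (hTransform (of fun x y => exp (g x) * P x y) lam h) xs k xs := by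
  refine tsum_congr fun k => ?_
  rw [firstPassage, mul_sum]
  refine sum_congr rfl fun w _ => ?_
  rw [mul_ite, mul_zero]
  exact if_congr Iff.rfl (pathWeight_mul_exp_sum_sub_eq P g hlam hpos L _
    ((returnPath_zero ..).trans (returnPath_last ..).symm)) rfl

end FirstReturn

open FirstReturn in
theorem statement2_general {X : Type*} [Fintype X] [DecidableEq X]
    (P : Matrix X X ℝ) (hP : StochasticMat P) (hprim : PrimitiveMat P)
    (C : X → ℝ) (α : ℝ) (xs : X)
    (lam : ℝ) (h : X → ℝ) (hpos : ∀ x, 0 < h x)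
    (heig : (Matrix.of fun x y => Real.exp (α * C x) * P x y) *ᵥ h = lam • h) :
    retE P xs xs
        (fun k p => Real.exp (∑ i : Fin (k + 1), (α * C (p i.castSucc) - Real.log lam)))
      = 1 ∧
    ∀ L : ℝ,
      retE P xs xs
          (fun k p => Real.exp (∑ i : Fin (k + 1), (α * C (p i.castSucc) - L))) = 1 →
        L = Real.log lam := by
  set Q : Matrix X X ℝ := of fun x y => exp (α * C x) * P x y
  have hQ : ∀ x y, 0 ≤ Q x y := fun x y => mul_nonneg (exp_nonneg _) (hP.1 x y)
  obtain ⟨y, -, hy⟩ := exists_lt_of_sum_lt (s := univ) (f := 0) (g := P xs)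
    (by simp [hP.2 xs])
  have hlam : 0 < lam := pos_of_mulVec_eq_smul hQ hpos heig (mul_pos (exp_pos _) hy)
  have hM := hTransform_stochastic hQ hlam hpos heig
  have hMprim : PrimitiveMat (hTransform Q lam h) := hprim.of_pos_iff hP.1 hM.1 fun x y => by
    rw [hTransform_pos_iff hlam hpos]
    exact (mul_pos_iff_of_pos_left (exp_pos _)).symm
  have hsum := hasSum_firstPassage hM hMprim xs
  have hret := retE_exp_sum_sub_eq_tsum P (fun x => α * C x) hlam hpos xs
  refine ⟨(hret _).trans (by simpa using hsum.tsum_eq), fun L hL => ?_⟩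
  have ht := eq_one_of_tsum_pow_succ_mul_eq_one (firstPassage_nonneg hM.1 xs) hsum
    (exp_pos _).le ((hret L).symm.trans hL)
  linarith [(exp_eq_one_iff _).1 ht]

/-- Let `xs` be a (recurrent) state of the irreducible aperiodic finite
chain with transition matrix `P`, and `τ = inf {i ≥ 1 : Φ_i = xs}` the first return time.
Then `Λ(α) = ln λ̂₁` (the log-Perron eigenvalue of `diag (e^{αC}) P`, characterized by its
strictly positive right eigenvector) is the unique real solution `Λ` of the fixed-point
equation `E_{xs}[exp (∑_{i=0}^{τ-1} (α C(Φ_i) − Λ))] = 1`. -/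
theorem statement2 {X : Type*} [Fintype X] [DecidableEq X] [Nonempty X]
    (P : Matrix X X ℝ) (hP : StochasticMat P) (hprim : PrimitiveMat P)
    (C : X → ℝ) (α : ℝ) (hα : 0 < α) (xs : X)
    (lam : ℝ) (h : X → ℝ) (hpos : ∀ x, 0 < h x)
    (heig : (Matrix.of fun x y => Real.exp (α * C x) * P x y) *ᵥ h = lam • h) :
    retE P xs xs
        (fun k p => Real.exp (∑ i : Fin (k + 1), (α * C (p i.castSucc) - Real.log lam)))
      = 1 ∧
    ∀ L : ℝ,
      retE P xs xs
          (fun k p => Real.exp (∑ i : Fin (k + 1), (α * C (p i.castSucc) - L))) = 1 →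
        L = Real.log lam :=
  statement2_general P hP hprim C α xs lam h hpos heig
end

section
/- With x* a recurrent state, the risk-sensitive relative value function satisfies h(x) = E_x[exp(∑_{i=0}^{τ_{x*}−1} (α C(Φ_i) − Λ(α)))] for every x ∈ X, where h is the right Perron eigenvector of diag(e^{αC})P normalized so that h(x*) = 1. -/
/-!
Let `M = diag(e^{αC - Λ}) P`, so that `M h = h`, and let `B` be `M` with the column of `x*`
replaced by zeros. Splitting `M h = h` along that column gives `h = B h + M(·, x*)`, and
iterating, `h = ∑_{k<n} B^k M(·, x*) + B^n h`; the `k`-th term is exactly the contribution of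
the event `{τ = k + 1}` to the expectation. The remainder vanishes: `B h ≤ h`, and primitivity
makes the column of `x*` in `M^m` strictly positive, so that `B^m h ≤ r h` for some `r < 1`.
-/

open Matrix Filter Topology

lemma exists_lt_one_le_smul {X : Type*} [Finite X] {v h : X → ℝ} (hv : 0 ≤ v)
    (hvh : ∀ x, v x < h x) : ∃ r : ℝ, 0 ≤ r ∧ r < 1 ∧ v ≤ r • h := by
  rcases isEmpty_or_nonempty X with hX | hX
  · exact ⟨0, le_rfl, zero_lt_one, fun x => isEmptyElim x⟩
  have hpos : ∀ x, 0 < h x := fun x => (hv x).trans_lt (hvh x)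
  obtain ⟨x₀, hx₀⟩ := Finite.exists_max fun x => v x / h x
  refine ⟨v x₀ / h x₀, div_nonneg (hv x₀) (hpos x₀).le, (div_lt_one (hpos x₀)).2 (hvh x₀),
    fun x => ?_⟩
  simpa [← div_le_iff₀ (hpos x)] using hx₀ x

namespace Matrix

variable {X R : Type*}

section Order

variable [Fintype X] [Semiring R] [PartialOrder R] [IsOrderedRing R] {A N : Matrix X X R}

lemma mulVec_le_mulVec_of_nonneg (hA : ∀ a b, 0 ≤ A a b) {v w : X → R} (hvw : v ≤ w) :
    A *ᵥ v ≤ A *ᵥ w := fun a =>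
  Finset.sum_le_sum fun b _ => mul_le_mul_of_nonneg_left (hvw b) (hA a b)

lemma mulVec_nonneg_of_nonneg (hA : ∀ a b, 0 ≤ A a b) {v : X → R} (hv : 0 ≤ v) :
    0 ≤ A *ᵥ v := by
  simpa using mulVec_le_mulVec_of_nonneg hA hv

variable [DecidableEq X]

lemma pow_apply_le_pow_apply_s3 (hN : ∀ a b, 0 ≤ N a b) (hNA : ∀ a b, N a b ≤ A a b) (k : ℕ) :
    ∀ a b, (N ^ k) a b ≤ (A ^ k) a b := by
  induction k with
  | zero => exact fun a b => le_rfl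
  | succ k ih =>
    intro a b
    simp only [pow_succ, mul_apply]
    exact Finset.sum_le_sum fun c _ => mul_le_mul (ih a c) (hNA c b) (hN c b)
      ((pow_apply_nonneg hN k a c).trans (ih a c))

end Order

section Taboo

variable [DecidableEq X]

/-- `(tabooMat A xs ^ k) a b` sums the weights of the paths from `a` to `b` of length `k` that do
not visit `xs` at times `1, …, k`. -/
def tabooMat [Zero R] (A : Matrix X X R) (xs : X) : Matrix X X R :=
  of fun a b => if b = xs then 0 else A a b

lemma tabooMat_apply_nonneg [Zero R] [Preorder R] {A : Matrix X X R} (hA : ∀ a b, 0 ≤ A a b)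
    (xs a b : X) : 0 ≤ tabooMat A xs a b := by
  rw [tabooMat, of_apply]
  split_ifs
  exacts [le_rfl, hA a b]

lemma tabooMat_apply_le [Zero R] [Preorder R] {A : Matrix X X R} (hA : ∀ a b, 0 ≤ A a b)
    (xs a b : X) : tabooMat A xs a b ≤ A a b := by
  rw [tabooMat, of_apply]
  split_ifs
  exacts [hA a b, le_rfl]

variable [Fintype X]

lemma pow_tabooMat_apply_self [Semiring R] (A : Matrix X X R) (xs a : X) {k : ℕ} (hk : k ≠ 0) :
    (tabooMat A xs ^ k) a xs = 0 := by
  obtain ⟨k, rfl⟩ := Nat.exists_eq_succ_of_ne_zero hk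
  simp [pow_succ, mul_apply, tabooMat]

lemma mulVec_eq_tabooMat_mulVec_add [Semiring R] (A : Matrix X X R) (xs : X) (v : X → R) :
    A *ᵥ v = tabooMat A xs *ᵥ v + fun a => A a xs * v xs := by
  ext a
  have hsplit : ∀ b, A a b * v b = tabooMat A xs a b * v b + if b = xs then A a xs * v xs else 0 :=
    fun b => by by_cases hb : b = xs <;> simp [tabooMat, hb]
  simp only [mulVec, dotProduct, Pi.add_apply]
  rw [Finset.sum_congr rfl fun b _ => hsplit b, Finset.sum_add_distrib, Finset.sum_ite_eq']
  simp

end Taboo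

section Paths

variable [DecidableEq X] [CommSemiring R]

lemma sum_prod_cons_mul_eq_pow_mulVec [Fintype X] (N : Matrix X X R) (q : X → R) (k : ℕ) (x : X) :
    ∑ w : Fin k → X,
      (∏ i : Fin k, N ((Fin.cons x w : Fin (k+1) → X) i.castSucc)
          ((Fin.cons x w : Fin (k+1) → X) i.succ)) *
        q ((Fin.cons x w : Fin (k+1) → X) (Fin.last k)) = (N ^ k *ᵥ q) x := by
  induction k generalizing x with
  | zero => simp [mulVec, dotProduct, one_apply]
  | succ k ih =>
    rw [pow_succ', ← mulVec_mulVec, ← (Fin.consEquiv fun _ : Fin (k+1) => X).sum_comp,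
      Fintype.sum_prod_type]
    refine Finset.sum_congr rfl fun y _ => ?_
    rw [← ih y, Finset.mul_sum]
    refine Finset.sum_congr rfl fun w _ => ?_
    simp only [Fin.consEquiv_apply, Fin.prod_univ_succ, ← Fin.succ_last, Fin.cons_succ,
      Fin.castSucc_zero, Fin.cons_zero, ← Fin.succ_castSucc]
    ring

lemma prod_tabooMat_cons (M : Matrix X X R) (xs x : X) {k : ℕ} (w : Fin k → X) :
    ∏ i : Fin k, tabooMat M xs ((Fin.cons x w : Fin (k+1) → X) i.castSucc)
        ((Fin.cons x w : Fin (k+1) → X) i.succ) =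
      if ∀ i, w i ≠ xs then
        ∏ i : Fin k, M ((Fin.cons x w : Fin (k+1) → X) i.castSucc)
          ((Fin.cons x w : Fin (k+1) → X) i.succ)
      else 0 := by
  split_ifs with hw
  · exact Finset.prod_congr rfl fun i _ => by simp [tabooMat, hw i]
  · obtain ⟨i, hi⟩ := not_forall_not.1 hw
    exact Finset.prod_eq_zero (Finset.mem_univ i) (by simp [tabooMat, hi])

end Paths

section RealNonneg

variable [Fintype X] {A B : Matrix X X ℝ} {h v : X → ℝ}

lemma pos_of_mulVec_eq_smul_s3 (hA : ∀ a b, 0 ≤ A a b) (hh : ∀ x, 0 < h x) {lam : ℝ}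
    (hAh : A *ᵥ h = lam • h) {x y : X} (hxy : 0 < A x y) : 0 < lam := by
  have hAhx : 0 < (A *ᵥ h) x := Finset.sum_pos' (fun b _ => mul_nonneg (hA x b) (hh b).le)
    ⟨y, Finset.mem_univ y, mul_pos hxy (hh y)⟩
  rw [hAh, Pi.smul_apply, smul_eq_mul] at hAhx
  exact pos_of_mul_pos_left hAhx (hh x).le

variable [DecidableEq X]

lemma pow_mulVec_eq_self (hAh : A *ᵥ h = h) (k : ℕ) : A ^ k *ᵥ h = h := by
  induction k with
  | zero => simp
  | succ k ih => rw [pow_succ, ← mulVec_mulVec, hAh, ih]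

lemma pow_mulVec_le_pow_smul (hB : ∀ a b, 0 ≤ B a b) {c : ℝ} (hc : 0 ≤ c) (hBh : B *ᵥ h ≤ c • h)
    (n : ℕ) : B ^ n *ᵥ h ≤ c ^ n • h := by
  induction n with
  | zero => simp
  | succ n ih =>
    calc B ^ (n + 1) *ᵥ h = B ^ n *ᵥ (B *ᵥ h) := by rw [pow_succ, mulVec_mulVec]
      _ ≤ B ^ n *ᵥ (c • h) := mulVec_le_mulVec_of_nonneg (pow_apply_nonneg hB n) hBh
      _ = c • (B ^ n *ᵥ h) := mulVec_smul _ _ _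
      _ ≤ c • (c ^ n • h) := smul_le_smul_of_nonneg_left ih hc
      _ = c ^ (n + 1) • h := by rw [smul_smul, pow_succ']

lemma tendsto_pow_mulVec_nhds_zero (hB : ∀ a b, 0 ≤ B a b) (hh : 0 ≤ h) (hBh : B *ᵥ h ≤ h)
    {m : ℕ} (hm : m ≠ 0) {r : ℝ} (hr0 : 0 ≤ r) (hr1 : r < 1) (hBm : B ^ m *ᵥ h ≤ r • h) :
    Tendsto (fun n => B ^ n *ᵥ h) atTop (𝓝 0) := by
  have hbound : ∀ n, B ^ n *ᵥ h ≤ r ^ (n / m) • h := fun n => calc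
    B ^ n *ᵥ h = (B ^ m) ^ (n / m) *ᵥ (B ^ (n % m) *ᵥ h) := by
        rw [mulVec_mulVec, ← pow_mul, ← pow_add, Nat.div_add_mod]
    _ ≤ (B ^ m) ^ (n / m) *ᵥ h := by
        refine mulVec_le_mulVec_of_nonneg (pow_apply_nonneg (pow_apply_nonneg hB m) _) ?_
        simpa using pow_mulVec_le_pow_smul hB zero_le_one (by simpa using hBh) (n % m)
    _ ≤ r ^ (n / m) • h := pow_mulVec_le_pow_smul (pow_apply_nonneg hB m) hr0 hBm _
  rw [tendsto_pi_nhds]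
  intro x
  refine squeeze_zero (fun n => mulVec_nonneg_of_nonneg (pow_apply_nonneg hB n) hh x)
    (fun n => hbound n x) ?_
  simpa using ((tendsto_pow_atTop_nhds_zero_of_lt_one hr0 hr1).comp
    (Nat.tendsto_div_const_atTop hm)).mul_const (h x)

lemma hasSum_pow_mulVec (hB : ∀ a b, 0 ≤ B a b) (hv : 0 ≤ v) (hfix : B *ᵥ h + v = h)
    (hlim : Tendsto (fun n => B ^ n *ᵥ h) atTop (𝓝 0)) : HasSum (fun k => B ^ k *ᵥ v) h := by
  have hstep : ∀ k, B ^ k *ᵥ v = B ^ k *ᵥ h - B ^ (k + 1) *ᵥ h := fun k => by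
    rw [eq_sub_of_add_eq' hfix, mulVec_sub, pow_succ, mulVec_mulVec]
  have hpartial : ∀ n, ∑ k ∈ Finset.range n, B ^ k *ᵥ v = h - B ^ n *ᵥ h := fun n => by
    rw [Finset.sum_congr rfl fun k _ => hstep k, Finset.sum_range_sub', pow_zero, one_mulVec]
  refine Pi.hasSum.2 fun x => (hasSum_iff_tendsto_nat_of_nonneg
    (fun k => mulVec_nonneg_of_nonneg (pow_apply_nonneg hB k) hv x) _).2 ?_
  simp only [← Finset.sum_apply, hpartial]
  simpa using tendsto_const_nhds.sub (((continuous_apply x).tendsto 0).comp hlim)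

lemma pow_tabooMat_mulVec_lt (hA : ∀ a b, 0 ≤ A a b) (hh : ∀ x, 0 < h x) {k : ℕ} (hk : k ≠ 0)
    {xs y : X} (hpos : 0 < (A ^ k) y xs) : (tabooMat A xs ^ k *ᵥ h) y < (A ^ k *ᵥ h) y :=
  Finset.sum_lt_sum
    (fun b _ => mul_le_mul_of_nonneg_right (pow_apply_le_pow_apply_s3 (tabooMat_apply_nonneg hA xs)
      (tabooMat_apply_le hA xs) k y b) (hh b).le)
    ⟨xs, Finset.mem_univ xs, by
      dsimp only
      rw [pow_tabooMat_apply_self A xs y hk, zero_mul]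
      exact mul_pos hpos (hh xs)⟩

lemma hasSum_pow_tabooMat_mulVec (hA : ∀ a b, 0 ≤ A a b) (hh : ∀ x, 0 < h x)
    (hAh : A *ᵥ h = h) {xs : X} {m : ℕ} (hm : m ≠ 0) (hcol : ∀ y, 0 < (A ^ m) y xs) :
    HasSum (fun k => tabooMat A xs ^ k *ᵥ fun a => A a xs * h xs) h := by
  set B := tabooMat A xs
  have hB : ∀ a b, 0 ≤ B a b := tabooMat_apply_nonneg hA xs
  have hh0 : 0 ≤ h := fun a => (hh a).le
  have hv : 0 ≤ fun a => A a xs * h xs := fun a => mul_nonneg (hA a xs) (hh xs).le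
  have hfix : B *ᵥ h + (fun a => A a xs * h xs) = h :=
    (mulVec_eq_tabooMat_mulVec_add A xs h).symm.trans hAh
  have hBh : B *ᵥ h ≤ h := hfix.subst (motive := (B *ᵥ h ≤ ·)) (le_add_of_nonneg_right hv)
  have hlt : ∀ y, (B ^ m *ᵥ h) y < h y := fun y => by
    simpa only [pow_mulVec_eq_self hAh] using pow_tabooMat_mulVec_lt hA hh hm (hcol y)
  obtain ⟨r, hr0, hr1, hr⟩ :=
    exists_lt_one_le_smul (mulVec_nonneg_of_nonneg (pow_apply_nonneg hB m) hh0) hlt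
  exact hasSum_pow_mulVec hB hv hfix (tendsto_pow_mulVec_nhds_zero hB hh0 hBh hm hr0 hr1 hr)

lemma pow_rowScaled_apply_pos {P : Matrix X X ℝ} (hP : ∀ a b, 0 ≤ P a b) {d : X → ℝ}
    (hd : ∀ a, 0 < d a) {k : ℕ} {a b : X} (hk : 0 < (P ^ k) a b) :
    0 < ((of fun a b => d a * P a b) ^ k) a b := by
  have : Nonempty X := ⟨a⟩
  obtain ⟨z, hz⟩ := Finite.exists_min d
  have hle := pow_apply_le_pow_apply_s3 (N := d z • P) (A := of fun a b => d a * P a b)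
    (fun a b => mul_nonneg (hd z).le (hP a b))
    (fun a b => mul_le_mul_of_nonneg_right (hz a) (hP a b)) k a b
  rw [smul_pow, smul_apply, smul_eq_mul] at hle
  exact (mul_pos (pow_pos (hd z) k) hk).trans_le hle

end RealNonneg

end Matrix

lemma retE_exp_sum_eq_tsum {X : Type*} [Fintype X] [DecidableEq X] (P : Matrix X X ℝ)
    (f : X → ℝ) (xs x : X) :
    retE P xs x (fun k p => Real.exp (∑ i : Fin (k + 1), f (p i.castSucc))) =
      ∑' k : ℕ, (tabooMat (of fun a b => Real.exp (f a) * P a b) xs ^ k *ᵥ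
        fun a => Real.exp (f a) * P a xs) x := by
  set M : Matrix X X ℝ := of fun a b => Real.exp (f a) * P a b
  refine tsum_congr fun k => ?_
  rw [← sum_prod_cons_mul_eq_pow_mulVec]
  refine Finset.sum_congr rfl fun w _ => ?_
  rw [prod_tabooMat_cons, ite_mul, zero_mul]
  refine if_congr Iff.rfl ?_ rfl
  simp only [Real.exp_sum, Fin.prod_univ_castSucc, Fin.snoc_castSucc, Fin.succ_castSucc,
    Fin.succ_last, Fin.snoc_last, M, of_apply, Finset.prod_mul_distrib]
  ring

open Real in
theorem statement3_general {X : Type*} [Fintype X] [DecidableEq X]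
    (P : Matrix X X ℝ) (hP : StochasticMat P) (hprim : PrimitiveMat P)
    (C : X → ℝ) (α : ℝ) (xs : X)
    (lam : ℝ) (h : X → ℝ) (hpos : ∀ x, 0 < h x)
    (heig : (Matrix.of fun x y => Real.exp (α * C x) * P x y) *ᵥ h = lam • h)
    (hnorm : h xs = 1) :
    ∀ x : X,
      h x = retE P xs x
        (fun k p => Real.exp (∑ i : Fin (k + 1), (α * C (p i.castSucc) - Real.log lam))) := by
  intro x
  obtain ⟨hP0, hP1⟩ := hP
  obtain ⟨m, hm, hPm⟩ := hprim
  have hlam : 0 < lam := by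
    obtain ⟨y, -, hy⟩ := Finset.exists_lt_of_sum_lt (s := Finset.univ) (f := 0) (g := P xs)
      (by simp [hP1])
    exact pos_of_mulVec_eq_smul_s3 (fun a b => mul_nonneg (exp_pos _).le (hP0 a b)) hpos heig
      (mul_pos (exp_pos _) hy)
  set M : Matrix X X ℝ := of fun a b => exp (α * C a - log lam) * P a b
  have hM0 : ∀ a b, 0 ≤ M a b := fun a b => mul_nonneg (exp_pos _).le (hP0 a b)
  have hMh : M *ᵥ h = h := by
    have hM : M = lam⁻¹ • of fun a b => exp (α * C a) * P a b := by
      ext a b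
      simp [M, exp_sub, exp_log hlam, div_eq_inv_mul, mul_assoc]
    rw [hM, smul_mulVec, heig, smul_smul, inv_mul_cancel₀ hlam.ne', one_smul]
  have hsum := hasSum_pow_tabooMat_mulVec hM0 hpos hMh hm.ne' fun y =>
    pow_rowScaled_apply_pos hP0 (fun a => exp_pos _) (hPm y xs)
  simp only [hnorm, mul_one] at hsum
  rw [retE_exp_sum_eq_tsum P (fun a => α * C a - log lam)]
  exact (Pi.hasSum.1 hsum x).tsum_eq.symm

/-- With `xs` a recurrent state of the irreducible aperiodic finite chain,
the risk-sensitive relative value function satisfies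
`h x = E_x[exp (∑_{i=0}^{τ-1} (α C(Φ_i) − Λ(α)))]` for every `x`, where `h` is the strictly
positive right Perron eigenvector of `P̂ = diag (e^{αC}) P` normalized so that `h xs = 1`,
and `Λ(α) = ln λ̂₁` with `λ̂₁` the Perron eigenvalue. -/
theorem statement3 {X : Type*} [Fintype X] [DecidableEq X] [Nonempty X]
    (P : Matrix X X ℝ) (hP : StochasticMat P) (hprim : PrimitiveMat P)
    (C : X → ℝ) (α : ℝ) (hα : 0 < α) (xs : X)
    (lam : ℝ) (h : X → ℝ) (hpos : ∀ x, 0 < h x)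
    (heig : (Matrix.of fun x y => Real.exp (α * C x) * P x y) *ᵥ h = lam • h)
    (hnorm : h xs = 1) :
    ∀ x : X,
      h x = retE P xs x
        (fun k p => Real.exp (∑ i : Fin (k + 1), (α * C (p i.castSucc) - Real.log lam))) :=
  statement3_general P hP hprim C α xs lam h hpos heig hnorm
end

section
/- (Donsker–Varadhan variational formula, finite form) For any probability distributions p, q on a finite set X with q absolutely continuous with respect to p, D_KL(q‖p) = sup over all functions φ : X → ℝ of [E_q[φ(X)] − ln E_p[e^{φ(X)}]], and the supremum is attained at φ*(x) = ln(q(x)/p(x)). -/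
/-!
Gibbs' inequality `q log (r / q) ≤ r - q` (from `log t ≤ t - 1`), summed against the tilted
distribution `r = p e^φ / E_p[e^φ]`, bounds every `E_q[φ] − ln E_p[e^φ]` by `D_KL(q‖p)`.
The supremum is approached, though not necessarily attained when `q` vanishes where `p` does not,
by `φ = ln ((q + ε p) / p)`, for which `p e^φ = q + ε p` and the objective is at least
`D_KL(q‖p) − ln (1 + ε)`.
-/

open Real Finset

lemma mul_log_div_le_sub {q r : ℝ} (hq : 0 ≤ q) (hr : 0 ≤ r) (hrq : r = 0 → q = 0) :
    q * log (r / q) ≤ r - q := by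
  rcases hq.eq_or_lt with rfl | hq
  · simpa using hr
  have hr : 0 < r := hr.lt_of_ne fun h => hq.ne' (hrq h.symm)
  calc q * log (r / q) ≤ q * (r / q - 1) :=
        mul_le_mul_of_nonneg_left (log_le_sub_one_of_pos (by positivity)) hq.le
    _ = r - q := by field_simp

section Finite

variable {X : Type*} [Fintype X] {p q : X → ℝ}

lemma sum_mul_exp_pos (hp0 : ∀ x, 0 ≤ p x) (hp1 : ∑ x, p x = 1) (φ : X → ℝ) :
    0 < ∑ x, p x * exp (φ x) := by
  obtain ⟨x₀, -, hx₀⟩ := exists_ne_zero_of_sum_ne_zero (by simp [hp1] : ∑ x, p x ≠ 0)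
  exact sum_pos' (fun x _ => mul_nonneg (hp0 x) (exp_pos _).le)
    ⟨x₀, mem_univ _, mul_pos ((hp0 x₀).lt_of_ne' hx₀) (exp_pos _)⟩

lemma sum_mul_sub_log_sum_mul_exp_le (hp0 : ∀ x, 0 ≤ p x) (hp1 : ∑ x, p x = 1)
    (hq0 : ∀ x, 0 ≤ q x) (hq1 : ∑ x, q x = 1) (hac : ∀ x, p x = 0 → q x = 0) (φ : X → ℝ) :
    (∑ x, q x * φ x) - log (∑ x, p x * exp (φ x)) ≤ ∑ x, q x * log (q x / p x) := by
  set Z := ∑ x, p x * exp (φ x)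
  have hZ : 0 < Z := sum_mul_exp_pos hp0 hp1 φ
  set r : X → ℝ := fun x => p x * exp (φ x) / Z
  have hr0 (x : X) : 0 ≤ r x := by have := hp0 x; positivity
  have hr1 : ∑ x, r x = 1 := by rw [← sum_div, div_self hZ.ne']
  have hlog_tilt (x : X) :
      q x * log (r x / q x) = q x * φ x - q x * log Z - q x * log (q x / p x) := by
    rcases (hq0 x).eq_or_lt with hqx | hqx
    · simp [← hqx]
    have hpx : 0 < p x := (hp0 x).lt_of_ne fun h => hqx.ne (hac x h.symm).symm
    rw [log_div (by positivity) hqx.ne', log_div (mul_ne_zero hpx.ne' (exp_ne_zero _)) hZ.ne',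
      log_mul hpx.ne' (exp_ne_zero _), log_exp, log_div hqx.ne' hpx.ne']
    ring
  have gibbs : ∑ x, q x * log (r x / q x) ≤ 0 := by
    calc ∑ x, q x * log (r x / q x) ≤ ∑ x, (r x - q x) :=
          sum_le_sum fun x _ => mul_log_div_le_sub (hq0 x) (hr0 x) fun h =>
            hac x (by simpa [r, hZ.ne', exp_ne_zero] using h)
      _ = 0 := by rw [sum_sub_distrib, hr1, hq1, sub_self]
  simp only [hlog_tilt, sum_sub_distrib, ← sum_mul, hq1, one_mul] at gibbs
  linarith

lemma exists_lt_sum_mul_sub_log_sum_mul_exp (hp0 : ∀ x, 0 ≤ p x) (hp1 : ∑ x, p x = 1)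
    (hq0 : ∀ x, 0 ≤ q x) (hq1 : ∑ x, q x = 1) (hac : ∀ x, p x = 0 → q x = 0) {w : ℝ}
    (hw : w < ∑ x, q x * log (q x / p x)) :
    ∃ φ : X → ℝ, w < (∑ x, q x * φ x) - log (∑ x, p x * exp (φ x)) := by
  set ε := ∑ x, q x * log (q x / p x) - w
  have hε : 0 < ε := sub_pos.mpr hw
  refine ⟨fun x => log ((q x + ε * p x) / p x), ?_⟩
  have hexp (x : X) : p x * exp (log ((q x + ε * p x) / p x)) = q x + ε * p x := by
    rcases (hp0 x).eq_or_lt with hpx | hpx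
    · simp [← hpx, hac x hpx.symm]
    rw [exp_log (by have := hq0 x; positivity), mul_div_cancel₀ _ hpx.ne']
  have hmono (x : X) : q x * log (q x / p x) ≤ q x * log ((q x + ε * p x) / p x) := by
    rcases (hq0 x).eq_or_lt with hqx | hqx
    · simp [← hqx]
    have hpx : 0 < p x := (hp0 x).lt_of_ne fun h => hqx.ne (hac x h.symm).symm
    gcongr
    nlinarith
  have hZ : ∑ x, p x * exp (log ((q x + ε * p x) / p x)) = 1 + ε := by
    simp only [hexp, sum_add_distrib, ← mul_sum, hq1, hp1, mul_one]
  have hlog : log (1 + ε) < ε := by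
    simpa using log_lt_sub_one_of_pos (by linarith : 0 < 1 + ε) (by linarith)
  rw [hZ]
  linarith [sum_le_sum fun x (_ : x ∈ univ) => hmono x]

end Finite

theorem statement7_general {X : Type*} [Fintype X]
    (p q : X → ℝ)
    (hp0 : ∀ x, 0 ≤ p x) (hp1 : ∑ x, p x = 1)
    (hq0 : ∀ x, 0 ≤ q x) (hq1 : ∑ x, q x = 1)
    (hac : ∀ x, p x = 0 → q x = 0) :
    (∑ x, q x * Real.log (q x / p x)) =
      (⨆ φ : X → ℝ, ((∑ x, q x * φ x) - Real.log (∑ x, p x * Real.exp (φ x)))) ∧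
    (∑ x, q x * Real.log (q x / p x)) - Real.log (∑ x, p x * (q x / p x)) =
      ∑ x, q x * Real.log (q x / p x) := by
  refine ⟨(ciSup_eq_of_forall_le_of_forall_lt_exists_gt
    (sum_mul_sub_log_sum_mul_exp_le hp0 hp1 hq0 hq1 hac)
    fun w hw => exists_lt_sum_mul_sub_log_sum_mul_exp hp0 hp1 hq0 hq1 hac hw).symm, ?_⟩
  have hZ : ∑ x, p x * (q x / p x) = 1 := by
    simpa only [mul_div_cancel_of_imp' (hac _)] using hq1
  rw [hZ, log_one, sub_zero]

/-- **Donsker–Varadhan variational formula, finite form.** For probability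
distributions `p, q` on a finite set `X` with `q ≪ p`,
`D_KL(q‖p) = sup_{φ : X → ℝ} (E_q[φ] − ln E_p[e^φ])`, and the supremum is attained at
`φ* x = ln (q x / p x)` (the value at `φ*`, computed with `e^{φ* x} = q x / p x`, equals
`D_KL(q‖p)`). -/
theorem statement7 {X : Type*} [Fintype X] [Nonempty X]
    (p q : X → ℝ)
    (hp0 : ∀ x, 0 ≤ p x) (hp1 : ∑ x, p x = 1)
    (hq0 : ∀ x, 0 ≤ q x) (hq1 : ∑ x, q x = 1)
    (hac : ∀ x, p x = 0 → q x = 0) :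
    (∑ x, q x * Real.log (q x / p x)) =
      (⨆ φ : X → ℝ, ((∑ x, q x * φ x) - Real.log (∑ x, p x * Real.exp (φ x)))) ∧
    (∑ x, q x * Real.log (q x / p x)) - Real.log (∑ x, p x * (q x / p x)) =
      ∑ x, q x * Real.log (q x / p x) :=
  statement7_general p q hp0 hp1 hq0 hq1 hac
end

section
/- (Dual Gibbs variational formula) For any α > 0, any function φ : X → ℝ, and any probability distribution p on a finite set X: (1/α) ln E_p[e^{αφ(X)}] = sup over probability distributions q ≪ p of [E_q[φ(X)] − (1/α) D_KL(q‖p)], with the supremum attained at q*(x) = p(x)e^{αφ(x)} / ∑_y p(y)e^{αφ(y)}. -/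
/-!
Write `Z = ∑ₓ p x e^{αφ x}` and `q*` for the Gibbs distribution `p e^{αφ} / Z`. For every
probability vector `q ≪ p`, expanding `log (q / p) = log (q / q*) + αφ - log Z` gives
`E_q[φ] - D(q‖p)/α = (log Z - D(q‖q*)) / α`. Gibbs' inequality `D(q‖q*) ≥ 0` (a termwise
consequence of `log t ≤ t - 1`) bounds the objective by `log Z / α`, and `D(q*‖q*) = 0` shows the
bound is attained at `q*`.
-/

open Real Finset

namespace DiscreteGibbs

variable {X : Type*} [Fintype X]

noncomputable def partitionFn (p f : X → ℝ) : ℝ := ∑ y, p y * exp (f y)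

noncomputable def gibbs (p f : X → ℝ) (x : X) : ℝ := p x * exp (f x) / partitionFn p f

/-- Only meaningful for `q ≪ p`: where `p x = 0 < q x` the true value `∞` is replaced by the
junk `log (q x / 0) = 0`. -/
noncomputable def relEntropy (q p : X → ℝ) : ℝ := ∑ x, q x * log (q x / p x)

lemma sub_le_mul_log_div {q r : ℝ} (hq : 0 ≤ q) (hr : 0 ≤ r) (hqr : r = 0 → q = 0) :
    q - r ≤ q * log (q / r) := by
  rcases hr.eq_or_lt with rfl | hr
  · simp [hqr rfl]
  have h := self_sub_one_le_mul_log (div_nonneg hq hr.le)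
  calc q - r = r * (q / r - 1) := by field_simp
    _ ≤ r * (q / r * log (q / r)) := mul_le_mul_of_nonneg_left h hr.le
    _ = q * log (q / r) := by field_simp

lemma relEntropy_nonneg {q r : X → ℝ} (hq : ∀ x, 0 ≤ q x) (hr : ∀ x, 0 ≤ r x)
    (hqr : ∀ x, r x = 0 → q x = 0) (hsum : ∑ x, r x ≤ ∑ x, q x) : 0 ≤ relEntropy q r := by
  calc (0 : ℝ) ≤ ∑ x, q x - ∑ x, r x := sub_nonneg.mpr hsum
    _ = ∑ x, (q x - r x) := (sum_sub_distrib ..).symm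
    _ ≤ relEntropy q r := sum_le_sum fun x _ ↦ sub_le_mul_log_div (hq x) (hr x) (hqr x)

lemma relEntropy_self (q : X → ℝ) : relEntropy q q = 0 := by
  refine sum_eq_zero fun x _ ↦ ?_
  rcases eq_or_ne (q x) 0 with h | h <;> simp [h]

lemma partitionFn_pos {p : X → ℝ} (hp0 : ∀ x, 0 ≤ p x) (hp : 0 < ∑ x, p x) (f : X → ℝ) :
    0 < partitionFn p f := by
  obtain ⟨x, -, hx⟩ := exists_lt_of_sum_lt (f := fun _ ↦ (0 : ℝ)) (by simpa using hp)
  exact sum_pos' (fun y _ ↦ mul_nonneg (hp0 y) (exp_pos _).le)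
    ⟨x, mem_univ x, mul_pos hx (exp_pos _)⟩

lemma gibbs_nonneg {p : X → ℝ} (hp0 : ∀ x, 0 ≤ p x) (hp : 0 < ∑ x, p x) (f : X → ℝ)
    (x : X) : 0 ≤ gibbs p f x :=
  div_nonneg (mul_nonneg (hp0 x) (exp_pos _).le) (partitionFn_pos hp0 hp f).le

lemma sum_gibbs {p : X → ℝ} (hp0 : ∀ x, 0 ≤ p x) (hp : 0 < ∑ x, p x) (f : X → ℝ) :
    ∑ x, gibbs p f x = 1 := by
  simp only [gibbs]
  rw [← sum_div, ← partitionFn, div_self (partitionFn_pos hp0 hp f).ne']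

lemma gibbs_eq_zero_iff {p : X → ℝ} (hp0 : ∀ x, 0 ≤ p x) (hp : 0 < ∑ x, p x) (f : X → ℝ)
    (x : X) : gibbs p f x = 0 ↔ p x = 0 := by
  simp [gibbs, (partitionFn_pos hp0 hp f).ne', (exp_pos _).ne']

lemma relEntropy_eq_relEntropy_gibbs {p : X → ℝ} (hp0 : ∀ x, 0 ≤ p x) (hp : 0 < ∑ x, p x)
    (f : X → ℝ) {q : X → ℝ} (hq1 : ∑ x, q x = 1) (hqp : ∀ x, p x = 0 → q x = 0) :
    relEntropy q p = relEntropy q (gibbs p f) + ∑ x, q x * f x - log (partitionFn p f) := by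
  have hZ := partitionFn_pos hp0 hp f
  have hterm : ∀ x, q x * log (q x / p x) =
      q x * log (q x / gibbs p f x) + q x * f x - q x * log (partitionFn p f) := by
    intro x
    rcases eq_or_ne (q x) 0 with hqx | hqx
    · simp [hqx]
    have hpx : p x ≠ 0 := mt (hqp x) hqx
    rw [gibbs, log_div hqx hpx, log_div hqx, log_div (by positivity) hZ.ne',
      log_mul hpx (exp_pos _).ne', log_exp]
    · ring
    · exact div_ne_zero (mul_ne_zero hpx (exp_pos _).ne') hZ.ne'
  simp only [relEntropy, hterm, sum_sub_distrib, sum_add_distrib, ← sum_mul, hq1, one_mul]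

end DiscreteGibbs

open DiscreteGibbs in
theorem statement8_general {X : Type*} [Fintype X]
    (p : X → ℝ) (hp0 : ∀ x, 0 ≤ p x) (hp1 : ∑ x, p x = 1)
    (α : ℝ) (hα : 0 < α) (φ : X → ℝ) :
    IsGreatest
        {v : ℝ | ∃ q : X → ℝ, (∀ x, 0 ≤ q x) ∧ (∑ x, q x = 1) ∧
          (∀ x, p x = 0 → q x = 0) ∧
          v = (∑ x, q x * φ x) - (1 / α) * ∑ x, q x * Real.log (q x / p x)}
        ((1 / α) * Real.log (∑ x, p x * Real.exp (α * φ x))) ∧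
    ((∑ x, (p x * Real.exp (α * φ x) / ∑ y, p y * Real.exp (α * φ y)) * φ x) -
        (1 / α) * ∑ x, (p x * Real.exp (α * φ x) / ∑ y, p y * Real.exp (α * φ y)) *
          Real.log ((p x * Real.exp (α * φ x) / ∑ y, p y * Real.exp (α * φ y)) / p x)) =
      (1 / α) * Real.log (∑ x, p x * Real.exp (α * φ x)) := by
  have hp : 0 < ∑ x, p x := hp1 ▸ one_pos
  set f : X → ℝ := fun x ↦ α * φ x
  set g := gibbs p f
  have objective_eq : ∀ q : X → ℝ, ∑ x, q x = 1 → (∀ x, p x = 0 → q x = 0) →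
      (∑ x, q x * φ x) - 1 / α * relEntropy q p =
        1 / α * log (partitionFn p f) - 1 / α * relEntropy q g := by
    intro q hq1 hqp
    rw [relEntropy_eq_relEntropy_gibbs hp0 hp f hq1 hqp]
    simp only [f, mul_left_comm _ α, ← mul_sum]
    field_simp
    ring
  have hg1 := sum_gibbs hp0 hp f
  have hgp : ∀ x, p x = 0 → g x = 0 := fun x ↦ (gibbs_eq_zero_iff hp0 hp f x).mpr
  have attained := objective_eq g hg1 hgp
  rw [relEntropy_self, mul_zero, sub_zero] at attained
  refine ⟨⟨⟨g, gibbs_nonneg hp0 hp f, hg1, hgp, attained.symm⟩, ?_⟩, attained⟩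
  rintro v ⟨q, hq0, hq1, hqp, rfl⟩
  have hD : 0 ≤ relEntropy q g := relEntropy_nonneg hq0 (gibbs_nonneg hp0 hp f)
    (fun x hx ↦ hqp x ((gibbs_eq_zero_iff hp0 hp f x).mp hx)) (by rw [hq1, hg1])
  exact (objective_eq q hq1 hqp).trans_le (sub_le_self _ (by positivity))

/-- **dual Gibbs variational formula.** For any `α > 0`, any `φ : X → ℝ` and
any probability distribution `p` on a finite set `X`,
`(1/α) ln E_p[e^{αφ}]` is the greatest value of `E_q[φ] − (1/α) D_KL(q‖p)` over probability
distributions `q ≪ p`, and the supremum is attained at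
`q* x = p x e^{αφ x} / ∑_y p y e^{αφ y}`. -/
theorem statement8 {X : Type*} [Fintype X] [Nonempty X]
    (p : X → ℝ) (hp0 : ∀ x, 0 ≤ p x) (hp1 : ∑ x, p x = 1)
    (α : ℝ) (hα : 0 < α) (φ : X → ℝ) :
    IsGreatest
        {v : ℝ | ∃ q : X → ℝ, (∀ x, 0 ≤ q x) ∧ (∑ x, q x = 1) ∧
          (∀ x, p x = 0 → q x = 0) ∧
          v = (∑ x, q x * φ x) - (1 / α) * ∑ x, q x * Real.log (q x / p x)}
        ((1 / α) * Real.log (∑ x, p x * Real.exp (α * φ x))) ∧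
    ((∑ x, (p x * Real.exp (α * φ x) / ∑ y, p y * Real.exp (α * φ y)) * φ x) -
        (1 / α) * ∑ x, (p x * Real.exp (α * φ x) / ∑ y, p y * Real.exp (α * φ y)) *
          Real.log ((p x * Real.exp (α * φ x) / ∑ y, p y * Real.exp (α * φ y)) / p x)) =
      (1 / α) * Real.log (∑ x, p x * Real.exp (α * φ x)) :=
  statement8_general p hp0 hp1 α hα φ
end

section
/- For any irreducible aperiodic stochastic matrix Q with Q ≪ P, the entropic risk measure satisfies e(α) ≥ E_{π_Q}[C(X)] − (1/α) E_{π_Q}[D_KL(Q(X,·)‖P(X,·))]. -/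
open Matrix Filter Topology

/-- For any irreducible aperiodic stochastic matrix `Q` with `Q ≪ P`
(and stationary distribution `π_Q`), the entropic risk `e(α) = Λ(α)/α` satisfies
`e(α) ≥ E_{π_Q}[C] − (1/α) E_{π_Q}[D_KL(Q(X,·)‖P(X,·))]`; here `Λ(α)` is the log-Perron
eigenvalue of `diag (e^{αC}) P`, characterized by a strictly positive right eigenvector. -/
theorem statement10 {X : Type*} [Fintype X] [DecidableEq X] [Nonempty X]
    (P : Matrix X X ℝ) (hP : StochasticMat P) (hprim : PrimitiveMat P)
    (C : X → ℝ) (α : ℝ) (hα : 0 < α)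
    (lam : ℝ) (h : X → ℝ) (hpos : ∀ x, 0 < h x)
    (heig : (Matrix.of fun x y => Real.exp (α * C x) * P x y) *ᵥ h = lam • h)
    (Q : Matrix X X ℝ) (hQ : StochasticMat Q) (hQprim : PrimitiveMat Q)
    (hac : ∀ x y, P x y = 0 → Q x y = 0)
    (π : X → ℝ) (hπ0 : ∀ x, 0 ≤ π x) (hπ1 : ∑ x, π x = 1)
    (hπstat : ∀ y, ∑ x, π x * Q x y = π y) :
    (∑ x, π x * C x) -
        (1 / α) * ∑ x, π x * ∑ y, Q x y * Real.log (Q x y / P x y) ≤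
      Real.log lam / α := by
  obtain ⟨hPnn, hProw⟩ := hP
  obtain ⟨hQnn, hQrow⟩ := hQ
  set S : X → ℝ := fun x => ∑ y, P x y * h y with hSdef
  have hSpos : ∀ x, 0 < S x := by
    intro x
    have hex : ∃ y, P x y ≠ 0 := by
      by_contra hc
      push_neg at hc
      have : ∑ y, P x y = 0 := Finset.sum_eq_zero fun y _ => hc y
      rw [hProw x] at this; norm_num at this
    obtain ⟨y0, hy0⟩ := hex
    refine Finset.sum_pos' (fun y _ => mul_nonneg (hPnn x y) (hpos y).le)
      ⟨y0, Finset.mem_univ y0, mul_pos ((hPnn x y0).lt_of_ne (Ne.symm hy0)) (hpos y0)⟩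
  have heig' : ∀ x, Real.exp (α * C x) * S x = lam * h x := by
    intro x
    have := congrFun heig x
    simp only [mulVec, dotProduct, Matrix.of_apply, Pi.smul_apply, smul_eq_mul] at this
    rw [hSdef]
    rw [Finset.mul_sum]
    simpa [mul_assoc] using this
  have hlam : 0 < lam := by
    obtain ⟨x0⟩ := (inferInstance : Nonempty X)
    have h1 : 0 < lam * h x0 := (heig' x0) ▸ mul_pos (Real.exp_pos _) (hSpos x0)
    nlinarith [hpos x0]
  have hlog : ∀ x, α * C x + Real.log (S x) = Real.log lam + Real.log (h x) := by
    intro x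
    have := congrArg Real.log (heig' x)
    rwa [Real.log_mul (Real.exp_ne_zero _) (hSpos x).ne', Real.log_exp,
      Real.log_mul hlam.ne' (hpos x).ne'] at this
  -- pointwise key inequality per row x
  have key : ∀ x, (∑ y, Q x y * Real.log (h y)) -
      (∑ y, Q x y * Real.log (Q x y / P x y)) ≤ Real.log (S x) := by
    intro x
    have hterm : ∀ y, Q x y * Real.log (h y) - Q x y * Real.log (Q x y / P x y) ≤
        P x y * h y / S x - Q x y + Q x y * Real.log (S x) := by
      intro y
      rcases eq_or_lt_of_le (hQnn x y) with hQ0 | hQpos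
      · rw [← hQ0]
        simp only [zero_mul, sub_zero, add_zero, sub_self, zero_add]
        have : 0 ≤ P x y * h y / S x :=
          div_nonneg (mul_nonneg (hPnn x y) (hpos y).le) (hSpos x).le
        linarith
      · have hPpos : 0 < P x y := by
          rcases eq_or_lt_of_le (hPnn x y) with hP0 | hPp
          · exact absurd (hac x y hP0.symm) hQpos.ne'
          · exact hPp
        have ht : 0 < P x y * h y / (Q x y * S x) :=
          div_pos (mul_pos hPpos (hpos y)) (mul_pos hQpos (hSpos x))
        have hls := Real.log_le_sub_one_of_pos ht
        rw [Real.log_div (mul_pos hPpos (hpos y)).ne' (mul_pos hQpos (hSpos x)).ne',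
          Real.log_mul hPpos.ne' (hpos y).ne', Real.log_mul hQpos.ne' (hSpos x).ne'] at hls
        have hdiv : Real.log (Q x y / P x y) = Real.log (Q x y) - Real.log (P x y) :=
          Real.log_div hQpos.ne' hPpos.ne'
        have hq : P x y * h y / (Q x y * S x) * Q x y = P x y * h y / S x := by
          rw [div_mul_eq_mul_div, mul_comm (Q x y) (S x),
            mul_div_mul_right _ _ hQpos.ne']
        nlinarith [mul_le_mul_of_nonneg_left hls hQpos.le]
    calc (∑ y, Q x y * Real.log (h y)) - (∑ y, Q x y * Real.log (Q x y / P x y))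
        = ∑ y, (Q x y * Real.log (h y) - Q x y * Real.log (Q x y / P x y)) := by
          rw [Finset.sum_sub_distrib]
      _ ≤ ∑ y, (P x y * h y / S x - Q x y + Q x y * Real.log (S x)) :=
          Finset.sum_le_sum fun y _ => hterm y
      _ = (∑ y, P x y * h y) / S x - (∑ y, Q x y) + (∑ y, Q x y) * Real.log (S x) := by
          rw [Finset.sum_add_distrib, Finset.sum_sub_distrib, Finset.sum_div,
            Finset.sum_mul]
      _ = Real.log (S x) := by
          rw [hQrow x]
          have hSx : (∑ y, P x y * h y) = S x := rfl
          rw [hSx, div_self (hSpos x).ne']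
          ring
  -- combine: per-x inequality
  have key2 : ∀ x, α * C x - (∑ y, Q x y * Real.log (Q x y / P x y)) ≤
      Real.log lam + Real.log (h x) - ∑ y, Q x y * Real.log (h y) := by
    intro x
    have := key x
    have := hlog x
    linarith
  have main : α * (∑ x, π x * C x) - (∑ x, π x * ∑ y, Q x y * Real.log (Q x y / P x y))
      ≤ Real.log lam := by
    have hsum : ∑ x, π x * (α * C x - ∑ y, Q x y * Real.log (Q x y / P x y)) ≤
        ∑ x, π x * (Real.log lam + Real.log (h x) - ∑ y, Q x y * Real.log (h y)) :=
      Finset.sum_le_sum fun x _ => mul_le_mul_of_nonneg_left (key2 x) (hπ0 x)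
    have hL : ∑ x, π x * (α * C x - ∑ y, Q x y * Real.log (Q x y / P x y)) =
        α * (∑ x, π x * C x) - (∑ x, π x * ∑ y, Q x y * Real.log (Q x y / P x y)) := by
      rw [Finset.mul_sum, ← Finset.sum_sub_distrib]
      exact Finset.sum_congr rfl fun x _ => by ring
    have hswap : ∑ x, π x * ∑ y, Q x y * Real.log (h y) = ∑ y, π y * Real.log (h y) := by
      calc ∑ x, π x * ∑ y, Q x y * Real.log (h y)
          = ∑ x, ∑ y, π x * Q x y * Real.log (h y) := by
            refine Finset.sum_congr rfl fun x _ => ?_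
            rw [Finset.mul_sum]
            exact Finset.sum_congr rfl fun y _ => by ring
        _ = ∑ y, ∑ x, π x * Q x y * Real.log (h y) := Finset.sum_comm
        _ = ∑ y, (∑ x, π x * Q x y) * Real.log (h y) := by
            refine Finset.sum_congr rfl fun y _ => ?_
            rw [Finset.sum_mul]
        _ = ∑ y, π y * Real.log (h y) := by
            refine Finset.sum_congr rfl fun y _ => by rw [hπstat y]
    have hR : ∑ x, π x * (Real.log lam + Real.log (h x) - ∑ y, Q x y * Real.log (h y)) =
        Real.log lam := by
      calc ∑ x, π x * (Real.log lam + Real.log (h x) - ∑ y, Q x y * Real.log (h y))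
          = ∑ x, (π x * Real.log lam + π x * Real.log (h x) -
              π x * ∑ y, Q x y * Real.log (h y)) :=
            Finset.sum_congr rfl fun x _ => by ring
        _ = (∑ x, π x * Real.log lam) + (∑ x, π x * Real.log (h x)) -
              ∑ x, π x * ∑ y, Q x y * Real.log (h y) := by
            rw [Finset.sum_sub_distrib, Finset.sum_add_distrib]
        _ = Real.log lam := by
            rw [hswap, ← Finset.sum_mul, hπ1]
            ring
    rw [hL, hR] at hsum
    exact hsum
  rw [le_div_iff₀ hα]
  have hα' : α ≠ 0 := hα.ne'
  have heq : ((∑ x, π x * C x) -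
      (1 / α) * ∑ x, π x * ∑ y, Q x y * Real.log (Q x y / P x y)) * α =
      α * (∑ x, π x * C x) -
        (∑ x, π x * ∑ y, Q x y * Real.log (Q x y / P x y)) := by
    field_simp
  rw [heq]
  exact main
end

section
/- Suppose the family of transition matrices {P_θ : θ ∈ ℝ^l} has closure P̄ (in the space of |X|×|X| matrices) such that every P ∈ P̄ is irreducible and aperiodic with common recurrent state x*. Then there exists R̄ > 1 such that for every R ∈ (1, R̄) there exist constants 1 < m(R) ≤ M(R) < ∞ with m(R) < E^P_x[R^{τ_{x*}}] < M(R) for all P ∈ P̄ and all x ∈ X. Moreover M(R) can be chosen so that M(R) → 1 as R → 1. -/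
open Matrix Filter Topology

set_option linter.unusedSectionVars false

section Aux

variable {X : Type*} [Fintype X] [DecidableEq X]

variable {X : Type*} [Fintype X] [DecidableEq X]

/-- Probability of the path `x → w 0 → ⋯ → w (n-1)`. -/
def pp (Q : Matrix X X ℝ) : (n : ℕ) → X → (Fin n → X) → ℝ
  | 0, _, _ => 1
  | n+1, x, w => Q x (w 0) * pp Q n (w 0) (Fin.tail w)

/-- Probability of avoiding `xs` for `n` steps. -/
def qf (Q : Matrix X X ℝ) (xs : X) : ℕ → X → ℝ
  | 0, _ => 1
  | n+1, x => ∑ y, if y ≠ xs then Q x y * qf Q xs n y else 0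

/-- Probability that the first hit of `xs` is at time `n+1`. -/
def pf (Q : Matrix X X ℝ) (xs : X) : ℕ → X → ℝ
  | 0, x => Q x xs
  | n+1, x => ∑ y, if y ≠ xs then Q x y * pf Q xs n y else 0

lemma chain_eq_pp (Q : Matrix X X ℝ) : ∀ (n : ℕ) (x : X) (v : Fin n → X),
    (∏ i : Fin n, Q ((Fin.cons x v : Fin (n+1) → X) i.castSucc)
      ((Fin.cons x v : Fin (n+1) → X) i.succ)) = pp Q n x v := by
  intro n
  induction n with
  | zero => intro x v; simp [pp]
  | succ n ih =>
    intro x v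
    rw [Fin.prod_univ_succ]
    have h0 : (Fin.cons x v : Fin (n+2) → X) ((0 : Fin (n+1)).castSucc) = x := rfl
    have h1 : (Fin.cons x v : Fin (n+2) → X) ((0 : Fin (n+1)).succ) = v 0 := rfl
    rw [h0, h1]
    have hrest : (∏ i : Fin n, Q ((Fin.cons x v : Fin (n+2) → X) i.succ.castSucc)
        ((Fin.cons x v : Fin (n+2) → X) i.succ.succ)) = pp Q n (v 0) (Fin.tail v) := by
      rw [← ih (v 0) (Fin.tail v)]
      apply Finset.prod_congr rfl
      intro i _
      simp [Fin.cons_self_tail, Fin.tail, ← Fin.succ_castSucc]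
    rw [hrest, pp]

section Basic

variable {Q : Matrix X X ℝ} {xs : X}

lemma sum_split_xs (f : X → ℝ) :
    f xs + (∑ y, if y ≠ xs then f y else 0) = ∑ y, f y := by
  have h1 : f xs = ∑ y, if y = xs then f y else 0 := by simp
  rw [h1, ← Finset.sum_add_distrib]
  refine Finset.sum_congr rfl fun y _ => ?_
  by_cases hy : y = xs <;> simp [hy]

lemma qf_nonneg (hQ0 : ∀ x y, 0 ≤ Q x y) : ∀ n x, 0 ≤ qf Q xs n x := by
  intro n
  induction n with
  | zero => intro x; simp [qf]
  | succ n ih =>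
    intro x
    refine Finset.sum_nonneg fun y _ => ?_
    by_cases hy : y ≠ xs <;> simp [hy]
    exact mul_nonneg (hQ0 x y) (ih y)

lemma pf_nonneg (hQ0 : ∀ x y, 0 ≤ Q x y) : ∀ n x, 0 ≤ pf Q xs n x := by
  intro n
  induction n with
  | zero => intro x; exact hQ0 x xs
  | succ n ih =>
    intro x
    refine Finset.sum_nonneg fun y _ => ?_
    by_cases hy : y ≠ xs <;> simp [hy]
    exact mul_nonneg (hQ0 x y) (ih y)

lemma qf_succ_le (hQ0 : ∀ x y, 0 ≤ Q x y) (hQ1 : ∀ x, ∑ y, Q x y = 1) : ∀ n x, qf Q xs (n+1) x ≤ qf Q xs n x := by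
  intro n
  induction n with
  | zero =>
    intro x
    show (∑ y, if y ≠ xs then Q x y * qf Q xs 0 y else 0) ≤ 1
    rw [← hQ1 x]
    refine Finset.sum_le_sum fun y _ => ?_
    by_cases hy : y ≠ xs <;> simp [hy, qf, hQ0 x y]
  | succ n ih =>
    intro x
    show (∑ y, if y ≠ xs then Q x y * qf Q xs (n+1) y else 0)
      ≤ (∑ y, if y ≠ xs then Q x y * qf Q xs n y else 0)
    refine Finset.sum_le_sum fun y _ => ?_
    by_cases hy : y ≠ xs <;> simp [hy]
    exact mul_le_mul_of_nonneg_left (ih y) (hQ0 x y)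

lemma qf_anti (hQ0 : ∀ x y, 0 ≤ Q x y) (hQ1 : ∀ x, ∑ y, Q x y = 1) {m n : ℕ} (h : m ≤ n) (x : X) : qf Q xs n x ≤ qf Q xs m x := by
  induction n with
  | zero => simp_all
  | succ n ih =>
    rcases Nat.lt_or_ge m (n+1) with h' | h'
    · exact (qf_succ_le hQ0 hQ1 n x).trans (ih (Nat.lt_succ_iff.mp h'))
    · have : m = n + 1 := le_antisymm h h'
      subst this; rfl

lemma qf_le_one (hQ0 : ∀ x y, 0 ≤ Q x y) (hQ1 : ∀ x, ∑ y, Q x y = 1) (n : ℕ) (x : X) : qf Q xs n x ≤ 1 :=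
  qf_anti hQ0 hQ1 (Nat.zero_le n) x

lemma pf_add_qf (hQ1 : ∀ x, ∑ y, Q x y = 1) : ∀ n x, pf Q xs n x + qf Q xs (n+1) x = qf Q xs n x := by
  intro n
  induction n with
  | zero =>
    intro x
    show Q x xs + (∑ y, if y ≠ xs then Q x y * qf Q xs 0 y else 0) = 1
    have : (∑ y, if y ≠ xs then Q x y * qf Q xs 0 y else 0)
        = ∑ y, if y ≠ xs then Q x y else 0 := by
      refine Finset.sum_congr rfl fun y _ => ?_
      by_cases hy : y ≠ xs <;> simp [hy, qf]
    rw [this, sum_split_xs (xs := xs) (fun y => Q x y), hQ1 x]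
  | succ n ih =>
    intro x
    show (∑ y, if y ≠ xs then Q x y * pf Q xs n y else 0)
        + (∑ y, if y ≠ xs then Q x y * qf Q xs (n+1) y else 0)
      = (∑ y, if y ≠ xs then Q x y * qf Q xs n y else 0)
    rw [← Finset.sum_add_distrib]
    refine Finset.sum_congr rfl fun y _ => ?_
    by_cases hy : y ≠ xs <;> simp [hy]
    rw [← mul_add, ih y]

lemma pf_le_qf (hQ0 : ∀ x y, 0 ≤ Q x y) (hQ1 : ∀ x, ∑ y, Q x y = 1) (n : ℕ) (x : X) :
    pf Q xs n x ≤ qf Q xs n x := by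
  have := pf_add_qf (xs := xs) hQ1 n x
  nlinarith [qf_nonneg (xs := xs) hQ0 (n+1) x]

lemma qf_add_le (hQ0 : ∀ x y, 0 ≤ Q x y) (hQ1 : ∀ x, ∑ y, Q x y = 1)
    {B : ℝ} (hB : 0 ≤ B) {n : ℕ} (hqB : ∀ y, qf Q xs n y ≤ B) :
    ∀ m x, qf Q xs (m + n) x ≤ qf Q xs m x * B := by
  intro m
  induction m with
  | zero => intro x; simpa [qf] using hqB x
  | succ m ih =>
    intro x
    have hrw : m + 1 + n = (m + n) + 1 := by omega
    rw [hrw]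
    show (∑ y, if y ≠ xs then Q x y * qf Q xs (m+n) y else 0)
      ≤ (∑ y, if y ≠ xs then Q x y * qf Q xs m y else 0) * B
    rw [Finset.sum_mul]
    refine Finset.sum_le_sum fun y _ => ?_
    by_cases hy : y ≠ xs <;> simp [hy]
    calc Q x y * qf Q xs (m+n) y ≤ Q x y * (qf Q xs m y * B) :=
          mul_le_mul_of_nonneg_left ((ih y).trans_eq rfl) (hQ0 x y)
      _ = Q x y * qf Q xs m y * B := by ring

lemma sum_pf_range (hQ1 : ∀ x, ∑ y, Q x y = 1) (n : ℕ) (x : X) :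
    ∑ k ∈ Finset.range n, pf Q xs k x = 1 - qf Q xs n x := by
  induction n with
  | zero => simp [qf]
  | succ n ih =>
    rw [Finset.sum_range_succ, ih]
    have := pf_add_qf (xs := xs) hQ1 n x
    linarith

/-- Powers of a stochastic matrix are stochastic. -/
lemma stoch_pow (hQ0 : ∀ x y, 0 ≤ Q x y) (hQ1 : ∀ x, ∑ y, Q x y = 1) (n : ℕ) :
    (∀ x y, 0 ≤ (Q ^ n) x y) ∧ ∀ x, ∑ y, (Q ^ n) x y = 1 := by
  induction n with
  | zero =>
    constructor
    · intro x y; rcases eq_or_ne x y with h | h <;> simp [h, Matrix.one_apply]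
    · intro x; simp [Matrix.one_apply]
  | succ n ih =>
    constructor
    · intro x y
      rw [pow_succ, Matrix.mul_apply]
      exact Finset.sum_nonneg fun z _ => mul_nonneg (ih.1 x z) (hQ0 z y)
    · intro x
      simp only [pow_succ, Matrix.mul_apply]
      rw [Finset.sum_comm]
      calc (∑ z, ∑ y, (Q ^ n) x z * Q z y) = ∑ z, (Q ^ n) x z * ∑ y, Q z y := by
            simp [Finset.mul_sum]
        _ = 1 := by simp only [hQ1, mul_one]; exact ih.2 x

lemma qf_le_one_sub_pow (hQ0 : ∀ x y, 0 ≤ Q x y) (hQ1 : ∀ x, ∑ y, Q x y = 1) :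
    ∀ n x, qf Q xs (n + 1) x ≤ 1 - (Q ^ (n + 1)) x xs := by
  intro n
  induction n with
  | zero =>
    intro x
    show (∑ y, if y ≠ xs then Q x y * qf Q xs 0 y else 0) ≤ 1 - (Q ^ 1) x xs
    have h1 : (∑ y, if y ≠ xs then Q x y * qf Q xs 0 y else 0)
        = ∑ y, if y ≠ xs then Q x y else 0 := by
      refine Finset.sum_congr rfl fun y _ => ?_
      by_cases hy : y ≠ xs <;> simp [hy, qf]
    have h2 := sum_split_xs (xs := xs) (fun y => Q x y)
    rw [hQ1 x] at h2
    simp only [pow_one]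
    rw [h1]; linarith
  | succ n ih =>
    intro x
    show (∑ y, if y ≠ xs then Q x y * qf Q xs (n+1) y else 0) ≤ 1 - (Q ^ (n + 2)) x xs
    have hstep : (∑ y, if y ≠ xs then Q x y * qf Q xs (n+1) y else 0)
        ≤ ∑ y, if y ≠ xs then Q x y * (1 - (Q ^ (n+1)) y xs) else 0 := by
      refine Finset.sum_le_sum fun y _ => ?_
      by_cases hy : y ≠ xs <;> simp [hy]
      exact mul_le_mul_of_nonneg_left (ih y) (hQ0 x y)
    have hsplit := sum_split_xs (xs := xs) (fun y => Q x y * (1 - (Q ^ (n+1)) y xs))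
    have hfull : (∑ y, Q x y * (1 - (Q ^ (n+1)) y xs)) = 1 - (Q ^ (n + 2)) x xs := by
      have hmul : (Q ^ (n + 2)) x xs = ∑ y, Q x y * (Q ^ (n+1)) y xs := by
        rw [show n + 2 = 1 + (n + 1) by omega, pow_add, pow_one, Matrix.mul_apply]
      rw [hmul]
      simp only [mul_sub, mul_one]
      rw [Finset.sum_sub_distrib, hQ1 x]
    have hpow := stoch_pow hQ0 hQ1 (n+1)
    have hentry : (Q ^ (n+1)) xs xs ≤ 1 := by
      calc (Q ^ (n+1)) xs xs ≤ ∑ y, (Q ^ (n+1)) xs y :=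
            Finset.single_le_sum (fun y _ => hpow.1 xs y) (Finset.mem_univ xs)
        _ = 1 := hpow.2 xs
    have hxs : 0 ≤ Q x xs * (1 - (Q ^ (n+1)) xs xs) :=
      mul_nonneg (hQ0 x xs) (by linarith)
    linarith

end Basic

section Bridge

variable {Q : Matrix X X ℝ} {xs : X}

lemma pp_snoc_cons (Q : Matrix X X ℝ) (n : ℕ) (x y b : X) (w : Fin n → X) :
    pp Q (n + 2) x (Fin.snoc (Fin.cons y w) b) = Q x y * pp Q (n + 1) y (Fin.snoc w b) := by
  rw [← Fin.cons_snoc_eq_snoc_cons]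
  simp [pp, Fin.tail_cons]

lemma sum_cons_split (n : ℕ) (f : (Fin (n + 1) → X) → ℝ) :
    ∑ w : Fin (n + 1) → X, f w = ∑ y : X, ∑ w : Fin n → X, f (Fin.cons y w) := by
  rw [← (Fin.consEquiv (fun _ : Fin (n+1) => X)).sum_comp f]
  rw [Fintype.sum_prod_type]
  rfl

lemma pret_eq_pf : ∀ (k : ℕ) (x : X),
    (∑ w : Fin k → X, if ∀ i, w i ≠ xs then pp Q (k + 1) x (Fin.snoc w xs) else 0)
      = pf Q xs k x := by
  intro k
  induction k with
  | zero =>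
    intro x
    rw [Finset.sum_eq_single_of_mem (Fin.elim0) (Finset.mem_univ _)]
    · have : (∀ i : Fin 0, Fin.elim0 i ≠ xs) := fun i => i.elim0
      rw [if_pos this]
      show Q x ((Fin.snoc Fin.elim0 xs : Fin 1 → X) 0) * pp Q 0 _ _ = Q x xs
      have h0 : (Fin.snoc Fin.elim0 xs : Fin 1 → X) 0 = xs := by
        rw [show (0 : Fin 1) = Fin.last 0 from rfl, Fin.snoc_last]
      rw [h0]; simp [pp]
    · intro w _ hw
      exact absurd (Subsingleton.elim w Fin.elim0) hw
  | succ k ih =>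
    intro x
    rw [sum_cons_split k (fun w => if ∀ i, w i ≠ xs then pp Q (k + 2) x (Fin.snoc w xs) else 0)]
    show _ = ∑ y, if y ≠ xs then Q x y * pf Q xs k y else 0
    refine Finset.sum_congr rfl fun y _ => ?_
    have hcond : ∀ w : Fin k → X,
        (∀ i : Fin (k+1), (Fin.cons y w : Fin (k+1) → X) i ≠ xs) ↔ (y ≠ xs ∧ ∀ i, w i ≠ xs) := by
      intro w
      constructor
      · intro h
        exact ⟨by simpa using h 0, fun i => by simpa using h i.succ⟩
      · intro ⟨h0, h⟩ i
        refine Fin.cases ?_ ?_ i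
        · simpa using h0
        · intro j; simpa using h j
    by_cases hy : y ≠ xs
    · rw [if_pos hy, ← ih y, Finset.mul_sum]
      refine Finset.sum_congr rfl fun w _ => ?_
      rw [pp_snoc_cons]
      by_cases hw : ∀ i, w i ≠ xs
      · rw [if_pos ((hcond w).mpr ⟨hy, hw⟩), if_pos hw]
      · rw [if_neg (fun h => hw ((hcond w).mp h).2), if_neg hw, mul_zero]
    · rw [if_neg hy]
      refine Finset.sum_eq_zero fun w _ => ?_
      rw [if_neg (fun h => hy ((hcond w).mp h).1)]

lemma retE_eq_tsum (R : ℝ) (x : X) :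
    retE Q xs x (fun k _ => R ^ (k + 1)) = ∑' k : ℕ, R ^ (k + 1) * pf Q xs k x := by
  unfold retE
  congr 1
  funext k
  rw [← pret_eq_pf (Q := Q) (xs := xs) k x, Finset.mul_sum]
  refine Finset.sum_congr rfl fun w _ => ?_
  by_cases hw : ∀ i, w i ≠ xs
  · rw [if_pos hw, if_pos hw]
    rw [show (Fin.snoc (Fin.cons x w) xs : Fin (k+2) → X) = Fin.cons x (Fin.snoc w xs) from
      (Fin.cons_snoc_eq_snoc_cons x w xs).symm]
    rw [chain_eq_pp Q (k+1) x (Fin.snoc w xs)]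
    ring
  · rw [if_neg hw, if_neg hw, mul_zero]

end Bridge

lemma qf_continuous (xs : X) : ∀ (n : ℕ) (x : X),
    Continuous (fun Q : Matrix X X ℝ => qf Q xs n x) := by
  intro n
  induction n with
  | zero =>
    intro x
    show Continuous fun _ : Matrix X X ℝ => (1:ℝ)
    exact continuous_const
  | succ n ih =>
    intro x
    show Continuous fun Q : Matrix X X ℝ => ∑ y, if y ≠ xs then Q x y * qf Q xs n y else 0
    refine continuous_finset_sum _ fun y _ => ?_
    by_cases hy : y ≠ xs
    · simp only [if_pos hy]
      exact (continuous_id.matrix_elem x y).mul (ih y)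
    · simp only [if_neg hy]
      exact continuous_const

/-- The key uniform bound: some `N ≥ 1` and `ρ < 1` bound the avoidance probability
for all matrices of a compact family of primitive stochastic matrices, uniformly. -/
lemma key_bound [Nonempty X] {Pfam : Set (Matrix X X ℝ)} (hcp : IsCompact Pfam)
    (hne : Pfam.Nonempty)
    (hmem : ∀ Q ∈ Pfam, StochasticMat Q ∧ PrimitiveMat Q) (xs : X) :
    ∃ (N : ℕ) (ρ : ℝ), 1 ≤ N ∧ 1/2 ≤ ρ ∧ ρ < 1 ∧
      ∀ Q ∈ Pfam, ∀ x, qf Q xs N x ≤ ρ := by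
  -- for each Q in the family pick n(Q) ≥ 1 with qf Q xs n(Q) x < 1 for all x
  have hsel : ∀ Q : Pfam, ∃ n : ℕ, 1 ≤ n ∧ ∀ x, qf (Q : Matrix X X ℝ) xs n x < 1 := by
    rintro ⟨Q, hQ⟩
    obtain ⟨⟨hQ0, hQ1⟩, ⟨n, hn, hpos⟩⟩ := hmem Q hQ
    obtain ⟨n', rfl⟩ : ∃ n', n = n' + 1 := ⟨n - 1, by omega⟩
    refine ⟨n' + 1, by omega, fun x => ?_⟩
    have := qf_le_one_sub_pow (xs := xs) hQ0 hQ1 n' x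
    have := hpos x xs
    dsimp only
    linarith
  choose nn hnn1 hnnlt using hsel
  -- the max of qf over x, a constant strictly below 1
  set c : Pfam → ℝ := fun Q => Finset.univ.sup' Finset.univ_nonempty
    (fun x => qf (Q : Matrix X X ℝ) xs (nn Q) x) with hc
  have hclt : ∀ Q : Pfam, c Q < 1 := by
    intro Q
    rw [hc]
    exact (Finset.sup'_lt_iff Finset.univ_nonempty).mpr fun x _ => hnnlt Q x
  -- open covering
  set U : Pfam → Set (Matrix X X ℝ) := fun Q =>
    {P | ∀ x, qf P xs (nn Q) x < (1 + c Q)/2} with hU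
  have hUopen : ∀ Q : Pfam, IsOpen (U Q) := by
    intro Q
    have : U Q = ⋂ x, {P : Matrix X X ℝ | qf P xs (nn Q) x < (1 + c Q)/2} := by
      ext P; simp [hU, Set.mem_iInter]
    rw [this]
    exact isOpen_iInter_of_finite fun x =>
      (isOpen_Iio (a := (1 + c Q)/2)).preimage (qf_continuous xs (nn Q) x)
  have hcover : Pfam ⊆ ⋃ Q : Pfam, U Q := by
    intro P hP
    refine Set.mem_iUnion.mpr ⟨⟨P, hP⟩, fun x => ?_⟩
    have h1 : qf P xs (nn ⟨P, hP⟩) x ≤ c ⟨P, hP⟩ :=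
      Finset.le_sup' (fun x => qf P xs (nn ⟨P, hP⟩) x) (Finset.mem_univ x)
    have := hclt ⟨P, hP⟩
    linarith
  obtain ⟨t, ht⟩ := hcp.elim_finite_subcover U hUopen hcover
  have htne : t.Nonempty := by
    obtain ⟨P, hP⟩ := hne
    obtain ⟨Q, hQt, _⟩ := Set.mem_iUnion₂.mp (ht hP)
    exact ⟨Q, hQt⟩
  -- uniform constants
  set N : ℕ := t.sup nn ⊔ 1 with hN
  set ρ : ℝ := t.sup' htne (fun Q => (1 + c Q)/2) with hρ
  refine ⟨N, ρ, le_sup_right, ?_, ?_, ?_⟩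
  · obtain ⟨Q, hQt⟩ := htne
    have h0 : (0:ℝ) ≤ c Q := by
      obtain ⟨⟨hQ0, hQ1⟩, -⟩ := hmem Q Q.2
      have := qf_nonneg (xs := xs) hQ0 (nn Q) (Classical.arbitrary X)
      exact le_trans this (Finset.le_sup' _ (Finset.mem_univ _))
    have : (1:ℝ)/2 ≤ (1 + c Q)/2 := by linarith
    exact this.trans (Finset.le_sup' (fun Q => (1 + c Q)/2) hQt)
  · rw [hρ]
    exact (Finset.sup'_lt_iff htne).mpr fun Q hQ => by have := hclt Q; linarith
  · intro P hP x
    obtain ⟨Q, hQt, hPQ⟩ := Set.mem_iUnion₂.mp (ht hP)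
    obtain ⟨⟨hP0, hP1⟩, -⟩ := hmem P hP
    have h1 : qf P xs N x ≤ qf P xs (nn Q) x :=
      qf_anti hP0 hP1 (le_trans (Finset.le_sup hQt) le_sup_left) x
    have h2 : qf P xs (nn Q) x < (1 + c Q)/2 := hPQ x
    exact (h1.trans_lt h2).le.trans (Finset.le_sup' (fun Q => (1 + c Q)/2) hQt)

lemma decay_bound [Nonempty X] {Pfam : Set (Matrix X X ℝ)} (hcp : IsCompact Pfam)
    (hne : Pfam.Nonempty)
    (hmem : ∀ Q ∈ Pfam, StochasticMat Q ∧ PrimitiveMat Q) (xs : X) :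
    ∃ s C : ℝ, 0 < s ∧ s < 1 ∧ 0 < C ∧
      ∀ Q ∈ Pfam, ∀ n x, qf Q xs n x ≤ C * s ^ n := by
  obtain ⟨N, ρ, hN1, hρ2, hρ1, hkey⟩ := key_bound hcp hne hmem xs
  have hρ0 : 0 < ρ := by linarith
  have hN0 : N ≠ 0 := by omega
  set s : ℝ := ρ ^ ((N : ℝ)⁻¹) with hs
  have hs0 : 0 < s := Real.rpow_pos_of_pos hρ0 _
  have hs1 : s < 1 := Real.rpow_lt_one hρ0.le hρ1 (by positivity)
  have hsN : s ^ N = ρ := Real.rpow_inv_natCast_pow hρ0.le hN0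
  refine ⟨s, ρ⁻¹, hs0, hs1, by positivity, ?_⟩
  intro Q hQ n x
  obtain ⟨⟨hQ0, hQ1⟩, -⟩ := hmem Q hQ
  -- step 1 : qf at multiples of N
  have hmult : ∀ j x, qf Q xs (N * j) x ≤ ρ ^ j := by
    intro j
    induction j with
    | zero => intro x; simp [qf]
    | succ j ih =>
      intro x
      have hrw : N * (j + 1) = N * j + N := by ring
      rw [hrw]
      calc qf Q xs (N * j + N) x ≤ qf Q xs (N * j) x * ρ :=
            qf_add_le hQ0 hQ1 hρ0.le (hkey Q hQ) (N * j) x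
        _ ≤ ρ ^ j * ρ := mul_le_mul_of_nonneg_right (ih x) hρ0.le
        _ = ρ ^ (j + 1) := by ring
  -- step 2 : general n
  have h1 : qf Q xs n x ≤ ρ ^ (n / N) :=
    (qf_anti hQ0 hQ1 (Nat.mul_div_le n N |>.trans_eq (by ring_nf)) x).trans
      (hmult (n / N) x)
  -- step 3 : convert to s powers
  have h2 : ρ ^ (n / N) ≤ ρ⁻¹ * s ^ n := by
    have e1 : ρ ^ (n / N) = s ^ (N * (n / N)) := by rw [pow_mul, hsN]
    have e2 : s ^ (N * (n / N)) * s ^ (n % N) = s ^ n := by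
      rw [← pow_add]; congr 1; exact Nat.div_add_mod n N
    have e3 : s ^ N ≤ s ^ (n % N) :=
      pow_le_pow_of_le_one hs0.le hs1.le (le_of_lt (Nat.mod_lt n (by omega)))
    rw [e1]
    rw [← e2] at *
    have h4 : s ^ (N * (n / N)) * (s ^ N) ≤ s ^ (N * (n / N)) * s ^ (n % N) :=
      mul_le_mul_of_nonneg_left e3 (by positivity)
    rw [hsN] at h4
    calc s ^ (N * (n / N)) = ρ⁻¹ * (s ^ (N * (n / N)) * ρ) := by field_simp
      _ ≤ ρ⁻¹ * (s ^ (N * (n / N)) * s ^ (n % N)) :=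
          mul_le_mul_of_nonneg_left h4 (by positivity)
  exact h1.trans h2


end Aux

/-- Let `Pfam` be a compact family of stochastic matrices on the finite
state space `X`, each irreducible and aperiodic (with common recurrent state `xs`). Then
there exists `R̄ > 1` such that for every `R ∈ (1, R̄)` there are constants
`1 < m(R) ≤ M(R) < ∞` with `m(R) < E^P_x[R^τ] < M(R)` for all `P ∈ Pfam` and all `x ∈ X`,
where `τ` is the first hitting time of `xs`; moreover `M(R)` can be chosen so that
`M(R) → 1` as `R ↓ 1`. -/
theorem statement12 {X : Type*} [Fintype X] [DecidableEq X] [Nonempty X]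
    (Pfam : Set (Matrix X X ℝ)) (hcp : IsCompact Pfam)
    (hmem : ∀ Q ∈ Pfam, StochasticMat Q ∧ PrimitiveMat Q)
    (xs : X) :
    ∃ Rbar : ℝ, 1 < Rbar ∧
      ∃ M : ℝ → ℝ,
        (∀ R : ℝ, 1 < R → R < Rbar →
          ∃ m : ℝ, 1 < m ∧ m ≤ M R ∧ ∀ Q ∈ Pfam, ∀ x : X,
            m < retE Q xs x (fun k _ => R ^ (k + 1)) ∧
            retE Q xs x (fun k _ => R ^ (k + 1)) < M R) ∧
        Tendsto M (𝓝[>] 1) (𝓝 1) := by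
  by_cases hne : Pfam.Nonempty
  · obtain ⟨s, C, hs0, hs1, hC0, hdecay⟩ := decay_bound hcp hne hmem xs
    have hsinv : 1 < s⁻¹ := (one_lt_inv₀ hs0).mpr hs1
    refine ⟨(1 + s⁻¹)/2, by linarith, fun R => 1 + 2*C*(R/(1-R*s) - 1/(1-s)), ?_, ?_⟩
    · intro R hR1 hR2
      have hRs : R * s < 1 := by
        have : R * s < ((1 + s⁻¹)/2) * s := by
          exact mul_lt_mul_of_pos_right hR2 hs0
        have h2 : ((1 + s⁻¹)/2) * s < s⁻¹ * s := by
          apply mul_lt_mul_of_pos_right _ hs0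
          linarith
        rw [inv_mul_cancel₀ hs0.ne'] at h2
        linarith
      have hRs0 : 0 ≤ R * s := by positivity
      have h1Rs : 0 < 1 - R * s := by linarith
      have h1s : 0 < 1 - s := by linarith
      set gap : ℝ := C*(R/(1-R*s) - 1/(1-s)) with hgap
      have hgap0 : 0 < gap := by
        rw [hgap]
        apply mul_pos hC0
        rw [sub_pos, div_lt_div_iff₀ h1s h1Rs]
        nlinarith
      have hMR : (1 : ℝ) + 2*C*(R/(1-R*s) - 1/(1-s)) = 1 + 2*gap := by rw [hgap]; ring
      refine ⟨min ((1+R)/2) (1 + 2*gap), ?_, ?_, ?_⟩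
      · rw [lt_min_iff]; constructor <;> [linarith; linarith]
      · exact (min_le_right _ _).trans_eq hMR.symm
      · intro Q hQ x
        obtain ⟨⟨hQ0, hQ1⟩, -⟩ := hmem Q hQ
        have hpfle : ∀ k, pf Q xs k x ≤ C * s ^ k := fun k =>
          (pf_le_qf hQ0 hQ1 k x).trans (hdecay Q hQ k x)
        have hpf0 : ∀ k, 0 ≤ pf Q xs k x := fun k => pf_nonneg hQ0 k x
        -- the summand
        set f : ℕ → ℝ := fun k => R ^ (k + 1) * pf Q xs k x with hf
        have hf0 : ∀ k, 0 ≤ f k := fun k => mul_nonneg (by positivity) (hpf0 k)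
        have hfle : ∀ k, f k ≤ (R*C) * (R*s) ^ k := by
          intro k
          rw [hf]
          calc R ^ (k+1) * pf Q xs k x ≤ R ^ (k+1) * (C * s ^ k) :=
                mul_le_mul_of_nonneg_left (hpfle k) (by positivity)
            _ = (R*C) * (R*s) ^ k := by rw [mul_pow]; ring
        have hgeoRs : Summable fun k : ℕ => (R*s) ^ k :=
          summable_geometric_of_lt_one hRs0 hRs
        have hgeos : Summable fun k : ℕ => s ^ k :=
          summable_geometric_of_lt_one hs0.le hs1
        have hfsum : Summable f :=
          Summable.of_nonneg_of_le hf0 hfle (hgeoRs.mul_left (R*C))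
        -- pf sums to one
        have hqf0 : Tendsto (fun n => qf Q xs n x) atTop (𝓝 0) := by
          apply squeeze_zero (fun n => qf_nonneg hQ0 n x) (fun n => hdecay Q hQ n x)
          have := (tendsto_pow_atTop_nhds_zero_of_lt_one hs0.le hs1).const_mul C
          simpa using this
        have hpfsum : HasSum (fun k => pf Q xs k x) 1 := by
          rw [hasSum_iff_tendsto_nat_of_nonneg hpf0]
          have : (fun n => ∑ k ∈ Finset.range n, pf Q xs k x)
              = fun n => 1 - qf Q xs n x := by
            funext n; exact sum_pf_range hQ1 n x
          rw [this]
          simpa using (tendsto_const_nhds (x := (1:ℝ))).sub hqf0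
        have hretE : retE Q xs x (fun k _ => R ^ (k + 1)) = ∑' k, f k :=
          retE_eq_tsum R x
        constructor
        · -- lower bound
          have hR_le : R ≤ ∑' k, f k := by
            have h1 : HasSum (fun k => R * pf Q xs k x) R := by
              simpa using hpfsum.mul_left R
            rw [← h1.tsum_eq]
            refine Summable.tsum_le_tsum (fun k => ?_) h1.summable hfsum
            rw [hf]
            apply mul_le_mul_of_nonneg_right _ (hpf0 k)
            calc R = R ^ 1 := (pow_one R).symm
              _ ≤ R ^ (k + 1) := pow_le_pow_right₀ (by linarith) (by omega)
          rw [hretE]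
          calc min ((1+R)/2) (1 + 2*gap) ≤ (1+R)/2 := min_le_left _ _
            _ < R := by linarith
            _ ≤ ∑' k, f k := hR_le
        · -- upper bound
          rw [hretE]
          set g : ℕ → ℝ := fun k => pf Q xs k x + ((R*C) * (R*s) ^ k - C * s ^ k)
            with hg
          have hfg : ∀ k, f k ≤ g k := by
            intro k
            show R ^ (k + 1) * pf Q xs k x
              ≤ pf Q xs k x + (R * C * (R * s) ^ k - C * s ^ k)
            have h1 : R ^ (k+1) * pf Q xs k x
                = pf Q xs k x + (R ^ (k+1) - 1) * pf Q xs k x := by ring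
            rw [h1]
            clear hf hg
            have h2 : (R ^ (k+1) - 1) * pf Q xs k x ≤ (R ^ (k+1) - 1) * (C * s ^ k) := by
              apply mul_le_mul_of_nonneg_left (hpfle k)
              have : (1:ℝ) ≤ R ^ (k+1) := one_le_pow₀ (by linarith)
              linarith
            have h3 : (R ^ (k+1) - 1) * (C * s ^ k) = (R*C) * (R*s) ^ k - C * s ^ k := by
              rw [mul_pow]; ring
            linarith
          have hgsum2 : Summable fun k => (R*C) * (R*s) ^ k - C * s ^ k :=
            (hgeoRs.mul_left (R*C)).sub (hgeos.mul_left C)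
          have hgsum : Summable g := hpfsum.summable.add hgsum2
          have htsumg : ∑' k, g k = 1 + 2*gap - gap := by
            rw [hg, Summable.tsum_add hpfsum.summable hgsum2, hpfsum.tsum_eq,
              Summable.tsum_sub (hgeoRs.mul_left (R*C)) (hgeos.mul_left C),
              tsum_mul_left, tsum_mul_left,
              tsum_geometric_of_lt_one hRs0 hRs, tsum_geometric_of_lt_one hs0.le hs1,
              hgap]
            rw [inv_eq_one_div, inv_eq_one_div]
            field_simp
            ring
          have h5 : ∑' k, f k ≤ ∑' k, g k := Summable.tsum_le_tsum hfg hfsum hgsum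
          rw [htsumg] at h5
          exact (h5.trans_lt (by linarith)).trans_le hMR.symm.le
    · -- the limit of M as R → 1⁺
      have h1s : (0:ℝ) < 1 - s := by linarith
      have hM1 : (fun R : ℝ => 1 + 2*C*(R/(1-R*s) - 1/(1-s))) 1 = 1 := by
        simp
      have hcont : ContinuousAt (fun R : ℝ => 1 + 2*C*(R/(1-R*s) - 1/(1-s))) 1 := by
        apply ContinuousAt.add continuousAt_const
        apply ContinuousAt.mul continuousAt_const
        apply ContinuousAt.sub _ continuousAt_const
        exact ContinuousAt.div continuousAt_id
          (continuousAt_const.sub (continuousAt_id.mul continuousAt_const))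
          (by simp; linarith)
      have h := hcont.tendsto
      have hval : (1:ℝ) + 2*C*(1/(1-1*s) - 1/(1-s)) = 1 := by
        rw [one_mul, sub_self, mul_zero, add_zero]
      rw [hval] at h
      exact h.mono_left nhdsWithin_le_nhds
  · -- empty family
    refine ⟨2, one_lt_two, id, fun R hR1 hR2 => ⟨(1+R)/2, by linarith, ?_, ?_⟩, ?_⟩
    · show (1+R)/2 ≤ R; linarith
    · intro Q hQ
      exact absurd ⟨Q, hQ⟩ hne
    · exact tendsto_id.mono_left nhdsWithin_le_nhds
end

section
/- If every stochastic matrix P in a compact family P̄ on a finite state space is irreducible and aperiodic with common state x*, then there exists N̂ ∈ ℕ such that P(τ_{x*} > N̂ | Φ_0 = x) ≤ 1/R̂ for all x ∈ X and all P ∈ P̄, for any fixed R̂ > 1; consequently P(τ_{x*} > kN̂ | Φ_0 = x) ≤ R̂^{−k} for all k ∈ ℕ, i.e., return times have uniformly geometric tails. -/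
open Matrix Filter Topology

/-- `tailProb P xs x N = P(τ > N | Φ_0 = x)`, the probability that the chain with
transition matrix `P` started at `x` has not visited `xs` during the first `N` steps,
written as a sum over the paths `(Φ_1, …, Φ_N)` avoiding `xs`. -/
noncomputable def tailProb {X : Type*} [Fintype X] [DecidableEq X] (P : Matrix X X ℝ)
    (xs x : X) (N : ℕ) : ℝ :=
  ∑ w : Fin N → X,
    if ∀ i, w i ≠ xs then
      ∏ i : Fin N, P ((Fin.cons x w : Fin (N+1) → X) i.castSucc)
        ((Fin.cons x w : Fin (N+1) → X) i.succ)
    else 0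

section Aux

variable {X : Type*} [Fintype X] [DecidableEq X]

lemma tailProb_zero (P : Matrix X X ℝ) (xs x : X) : tailProb P xs x 0 = 1 := by
  simp [tailProb]

lemma tailProb_succ (P : Matrix X X ℝ) (xs x : X) (N : ℕ) :
    tailProb P xs x (N+1) = ∑ y, if y ≠ xs then P x y * tailProb P xs y N else 0 := by
  rw [tailProb, ← Equiv.sum_comp (Fin.consEquiv (fun _ : Fin (N+1) => X)),
    Fintype.sum_prod_type]
  refine Finset.sum_congr rfl fun y _ => ?_
  have hprod : ∀ v : Fin N → X,
      (∏ i : Fin (N+1), P ((Fin.cons x (Fin.cons y v) : Fin (N+2) → X) i.castSucc)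
        ((Fin.cons y v : Fin (N+1) → X) i))
      = P x y * ∏ i : Fin N, P ((Fin.cons y v : Fin (N+1) → X) i.castSucc)
          ((Fin.cons y v : Fin (N+1) → X) i.succ) := by
    intro v
    rw [Fin.prod_univ_succ]
    simp [← Fin.succ_castSucc]
  simp only [Fin.consEquiv, Equiv.coe_fn_mk, Fin.forall_fin_succ, Fin.cons_zero, Fin.cons_succ, hprod, ite_and, mul_ite, mul_zero]
  rw [Finset.sum_ite_irrel, Finset.sum_const, smul_zero, tailProb, Finset.mul_sum]
  congr 1
  exact Finset.sum_congr rfl fun v _ => by simp [mul_ite, Fin.cons_succ]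

lemma tailProb_nonneg {P : Matrix X X ℝ} (hP : ∀ a b, 0 ≤ P a b) (xs x : X) (N : ℕ) :
    0 ≤ tailProb P xs x N := by
  refine Finset.sum_nonneg fun w _ => ?_
  split_ifs
  · exact Finset.prod_nonneg fun i _ => hP _ _
  · exact le_refl 0

lemma tailProb_le_one {P : Matrix X X ℝ} (hP : StochasticMat P) (xs x : X) (N : ℕ) :
    tailProb P xs x N ≤ 1 := by
  induction N generalizing x with
  | zero => simp [tailProb_zero]
  | succ N ih =>
    rw [tailProb_succ]
    calc ∑ y, (if y ≠ xs then P x y * tailProb P xs y N else 0)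
        ≤ ∑ y, P x y := by
          refine Finset.sum_le_sum fun y _ => ?_
          split_ifs
          · exact mul_le_of_le_one_right (hP.1 x y) (ih y)
          · exact hP.1 x y
      _ = 1 := hP.2 x

lemma tailProb_add_le {P : Matrix X X ℝ} (hP : StochasticMat P) (xs : X) (n : ℕ) (C : ℝ)
    (hC : 0 ≤ C) (h : ∀ y, tailProb P xs y n ≤ C) :
    ∀ m x, tailProb P xs x (m + n) ≤ tailProb P xs x m * C := by
  intro m
  induction m with
  | zero => intro x; simpa [tailProb_zero] using h x
  | succ m ih =>
    intro x
    have : m + 1 + n = (m + n) + 1 := by omega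
    rw [this, tailProb_succ, tailProb_succ, Finset.sum_mul]
    refine Finset.sum_le_sum fun y _ => ?_
    split_ifs
    · rw [mul_assoc]
      exact mul_le_mul_of_nonneg_left (ih y) (hP.1 x y)
    · rw [zero_mul]

lemma tailProb_mono {P : Matrix X X ℝ} (hP : StochasticMat P) (xs x : X) {m n : ℕ}
    (hmn : m ≤ n) : tailProb P xs x n ≤ tailProb P xs x m := by
  obtain ⟨d, rfl⟩ := Nat.exists_eq_add_of_le hmn
  calc tailProb P xs x (m + d) ≤ tailProb P xs x m * 1 :=
        tailProb_add_le hP xs d 1 zero_le_one (fun y => tailProb_le_one hP xs y d) m x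
    _ = _ := mul_one _

lemma stochastic_pow {P : Matrix X X ℝ} (hP : StochasticMat P) (n : ℕ) :
    StochasticMat (P ^ n) := by
  induction n with
  | zero =>
    constructor
    · intro a b; simp [Matrix.one_apply]; split_ifs <;> norm_num
    · intro a; simp [Matrix.one_apply]
  | succ n ih =>
    rw [pow_succ]
    constructor
    · intro a b
      exact Finset.sum_nonneg fun z _ => mul_nonneg (ih.1 a z) (hP.1 z b)
    · intro a
      simp only [Matrix.mul_apply]
      rw [Finset.sum_comm]
      calc ∑ z, ∑ b, (P ^ n) a z * P z b = ∑ z, (P ^ n) a z * ∑ b, P z b := by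
            simp [Finset.mul_sum]
        _ = 1 := by simp [hP.2, ih.2 a]

lemma tailProb_le_sub {P : Matrix X X ℝ} (hP : StochasticMat P) (xs : X) :
    ∀ n : ℕ, (∀ y, y ≠ xs → tailProb P xs y n ≤ 1 - (P ^ n) y xs) ∧
      (∀ x, tailProb P xs x (n + 1) ≤ 1 - (P ^ (n + 1)) x xs) := by
  have step : ∀ n : ℕ, (∀ y, y ≠ xs → tailProb P xs y n ≤ 1 - (P ^ n) y xs) →
      ∀ x, tailProb P xs x (n + 1) ≤ 1 - (P ^ (n + 1)) x xs := by
    intro n hn x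
    rw [tailProb_succ]
    have hpow : (P ^ (n + 1)) x xs = ∑ z, P x z * (P ^ n) z xs := by
      rw [pow_succ']; exact Matrix.mul_apply
    have hle : ∀ y : X, (if y ≠ xs then P x y * tailProb P xs y n else 0)
        ≤ P x y * (1 - (P ^ n) y xs) := by
      intro y
      split_ifs with hy
      · exact mul_le_mul_of_nonneg_left (hn y hy) (hP.1 x y)
      · refine mul_nonneg (hP.1 x y) ?_
        have := (stochastic_pow hP n).2 y
        have h1 : (P ^ n) y xs ≤ 1 := by
          rw [← this]
          exact Finset.single_le_sum (fun z _ => (stochastic_pow hP n).1 y z) (Finset.mem_univ xs)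
        linarith
    calc ∑ y, (if y ≠ xs then P x y * tailProb P xs y n else 0)
        ≤ ∑ y, P x y * (1 - (P ^ n) y xs) := Finset.sum_le_sum fun y _ => hle y
      _ = 1 - (P ^ (n + 1)) x xs := by
          rw [hpow]
          have : ∑ y, P x y * (1 - (P ^ n) y xs)
              = (∑ y, P x y) - ∑ y, P x y * (P ^ n) y xs := by
            rw [← Finset.sum_sub_distrib]
            exact Finset.sum_congr rfl fun y _ => by ring
          rw [this, hP.2 x]
  intro n
  induction n with
  | zero =>
    refine ⟨fun y hy => ?_, step 0 (fun y hy => ?_)⟩ <;>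
      simp [tailProb_zero, Matrix.one_apply, hy]
  | succ n ih =>
    exact ⟨fun y _ => ih.2 y, step (n + 1) (fun y _ => ih.2 y)⟩

lemma tailProb_lt_one {P : Matrix X X ℝ} (hP : StochasticMat P) (hprim : PrimitiveMat P)
    (xs : X) : ∃ n : ℕ, 0 < n ∧ ∀ x, tailProb P xs x n < 1 := by
  obtain ⟨n, hn, hpos⟩ := hprim
  obtain ⟨m, rfl⟩ := Nat.exists_eq_succ_of_ne_zero hn.ne'
  exact ⟨m + 1, Nat.succ_pos m, fun x =>
    lt_of_le_of_lt ((tailProb_le_sub hP xs m).2 x) (by linarith [hpos x xs])⟩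

lemma tailProb_continuous (xs x : X) (N : ℕ) :
    Continuous fun Q : Matrix X X ℝ => tailProb Q xs x N := by
  refine continuous_finset_sum _ fun w _ => ?_
  split_ifs
  · exact continuous_finset_prod _ fun i _ => continuous_id.matrix_elem _ _
  · exact continuous_const

end Aux

/-- If every stochastic matrix in a compact family `Pfam` on a finite
state space is irreducible and aperiodic (with common state `xs`), then for any fixed
`R̂ > 1` there exists `N̂ ∈ ℕ` such that `P(τ > N̂ | Φ_0 = x) ≤ 1/R̂` for all `x ∈ X` and
all `P ∈ Pfam`; consequently `P(τ > k N̂ | Φ_0 = x) ≤ R̂^{−k}` for all `k ∈ ℕ`, i.e. the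
return times have uniformly geometric tails. -/
theorem statement13 {X : Type*} [Fintype X] [DecidableEq X] [Nonempty X]
    (Pfam : Set (Matrix X X ℝ)) (hcp : IsCompact Pfam)
    (hmem : ∀ Q ∈ Pfam, StochasticMat Q ∧ PrimitiveMat Q)
    (xs : X) (Rhat : ℝ) (hR : 1 < Rhat) :
    ∃ Nhat : ℕ, 0 < Nhat ∧
      (∀ Q ∈ Pfam, ∀ x : X, tailProb Q xs x Nhat ≤ 1 / Rhat) ∧
      ∀ k : ℕ, ∀ Q ∈ Pfam, ∀ x : X, tailProb Q xs x (k * Nhat) ≤ (1 / Rhat) ^ k := by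
  have hRinv : 1 / Rhat < 1 := by
    rw [div_lt_one (by linarith)]; linarith
  have hRinv0 : (0:ℝ) < 1 / Rhat := by positivity
  rcases Pfam.eq_empty_or_nonempty with rfl | hne
  · exact ⟨1, one_pos, fun Q hQ => absurd hQ (by simp), fun k Q hQ => absurd hQ (by simp)⟩
  have hhalf : ∀ q : Pfam, ∃ n : ℕ, 0 < n ∧ ∀ x, tailProb (q : Matrix X X ℝ) xs x n < 1 :=
    fun q => tailProb_lt_one (hmem q q.2).1 (hmem q q.2).2 xs
  choose n hnpos hlt using hhalf
  set U : Pfam → Set (Matrix X X ℝ) := fun q => {Q | ∀ x, tailProb Q xs x (n q) < 1} with hU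
  have hUopen : ∀ q, IsOpen (U q) := by
    intro q
    have : U q = ⋂ x, {Q : Matrix X X ℝ | tailProb Q xs x (n q) < 1} := by
      ext Q; simp [hU, Set.mem_iInter]
    rw [this]
    exact isOpen_iInter_of_finite fun x =>
      isOpen_lt (tailProb_continuous xs x (n q)) continuous_const
  have hcover : Pfam ⊆ ⋃ q, U q := fun Q hQ => Set.mem_iUnion.2 ⟨⟨Q, hQ⟩, hlt ⟨Q, hQ⟩⟩
  obtain ⟨t, ht⟩ := hcp.elim_finite_subcover U hUopen hcover
  set n0 : ℕ := 1 + t.sup n with hn0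
  have hn0pos : 0 < n0 := by omega
  have hglobal : ∀ Q ∈ Pfam, ∀ x, tailProb Q xs x n0 < 1 := by
    intro Q hQ x
    obtain ⟨q, hq, hQq⟩ := Set.mem_iUnion₂.1 (ht hQ)
    calc tailProb Q xs x n0 ≤ tailProb Q xs x (n q) := by
          refine tailProb_mono (hmem Q hQ).1 xs x ?_
          have := Finset.le_sup (f := n) hq
          omega
      _ < 1 := hQq x
  have hmax : ∀ x : X, ∃ Qm ∈ Pfam, ∀ Q ∈ Pfam, tailProb Q xs x n0 ≤ tailProb Qm xs x n0 := by
    intro x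
    obtain ⟨Qm, hQm, hQmax⟩ :=
      hcp.exists_isMaxOn hne ((tailProb_continuous xs x n0).continuousOn)
    exact ⟨Qm, hQm, fun Q hQ => hQmax hQ⟩
  choose Qm hQmmem hQmmax using hmax
  set c : ℝ := Finset.univ.sup' Finset.univ_nonempty (fun x => tailProb (Qm x) xs x n0) with hc
  have hc1 : c < 1 := (Finset.sup'_lt_iff _).2 fun x _ => hglobal (Qm x) (hQmmem x) x
  have hcb : ∀ Q ∈ Pfam, ∀ x, tailProb Q xs x n0 ≤ c := fun Q hQ x =>
    le_trans (hQmmax x Q hQ) (Finset.le_sup' (fun x => tailProb (Qm x) xs x n0) (Finset.mem_univ x))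
  have hc0 : 0 ≤ c := by
    obtain ⟨Q, hQ⟩ := hne
    exact le_trans (tailProb_nonneg (hmem Q hQ).1.1 xs (Classical.arbitrary X) n0)
      (hcb Q hQ (Classical.arbitrary X))
  obtain ⟨m, hm⟩ := exists_pow_lt_of_lt_one hRinv0 hc1
  have hm0 : m ≠ 0 := by
    rintro rfl
    simp only [pow_zero] at hm
    linarith
  have hgeo : ∀ Q ∈ Pfam, ∀ j : ℕ, ∀ x, tailProb Q xs x (j * n0) ≤ c ^ j := by
    intro Q hQ j
    induction j with
    | zero => intro x; simp [tailProb_zero]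
    | succ j ih =>
      intro x
      have heq : (j + 1) * n0 = n0 + j * n0 := by ring
      rw [heq]
      calc tailProb Q xs x (n0 + j * n0) ≤ tailProb Q xs x n0 * c ^ j :=
            tailProb_add_le (hmem Q hQ).1 xs (j * n0) (c ^ j) (pow_nonneg hc0 j) ih n0 x
        _ ≤ c * c ^ j := mul_le_mul_of_nonneg_right (hcb Q hQ x) (pow_nonneg hc0 j)
        _ = c ^ (j + 1) := (pow_succ' c j).symm
  refine ⟨m * n0, Nat.mul_pos (Nat.pos_of_ne_zero hm0) hn0pos, ?_, ?_⟩
  · exact fun Q hQ x => le_trans (hgeo Q hQ m x) hm.le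
  · intro k Q hQ x
    have h1 : tailProb Q xs x (k * (m * n0)) ≤ c ^ (k * m) := by
      have : k * (m * n0) = (k * m) * n0 := by ring
      rw [this]; exact hgeo Q hQ (k * m) x
    calc tailProb Q xs x (k * (m * n0)) ≤ c ^ (k * m) := h1
      _ = (c ^ m) ^ k := by rw [← pow_mul, Nat.mul_comm]
      _ ≤ (1 / Rhat) ^ k := pow_le_pow_left₀ (pow_nonneg hc0 m) hm.le k
end

section
/- Under Assumptions that the closure P̄ of {P_θ} consists of irreducible aperiodic matrices with common recurrent state x* and that costs C_θ are uniformly bounded in [C_lo, C_hi], the value functions h_θ(x) = E^θ_x[exp(∑_{i=0}^{τ_{x*}−1}(αC_θ(Φ_i) − Λ_θ))] are uniformly bounded: there exist 0 < h_lo ≤ h_hi < ∞ with h_θ(x) ∈ [h_lo, h_hi] for all x ∈ X and θ ∈ ℝ^l. -/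
open Matrix Filter Topology

/-!
Put `g = α C_θ - Λ_θ` and `A = diag (e^g) P_θ`, so that the Perron vector satisfies `A h = h`.
The value function is `∑ₖ (Bᵏ c)(x)`, where `B` is `A` with the column of `x*` deleted and
`c = A(·, x*)`. Unrolling `h = h(x*) c + B h` bounds its partial sums by `h(x) / h(x*)`.
Compactness of the closure of `{P_θ}` and primitivity give `N` and `δ > 0` with `P_θ^N ≥ δ`
entrywise for every `θ`. Since `Λ_θ ≤ α C_hi`, we have `g ≥ -β` with `β = α (C_hi - C_lo)`,
hence `A ≥ e^{-β} P_θ`. This gives the Harnack bound `h(x) / h(x*) ≤ e^{Nβ} / δ`, and the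
lower bound `e^{-Nβ} δ` through the probability of reaching `x*` within `N` steps.
-/

open Finset

namespace Matrix

section nonneg

variable {X : Type*} [Fintype X]

lemma mulVec_apply_nonneg {M : Matrix X X ℝ} (hM : ∀ a b, 0 ≤ M a b) {v : X → ℝ}
    (hv : ∀ a, 0 ≤ v a) (x : X) : 0 ≤ (M *ᵥ v) x :=
  sum_nonneg fun b _ => mul_nonneg (hM x b) (hv b)

lemma mulVec_apply_le_mulVec_apply {M M' : Matrix X X ℝ} (hM : ∀ a b, 0 ≤ M a b)
    (hMM' : ∀ a b, M a b ≤ M' a b) {v v' : X → ℝ} (hv : ∀ a, 0 ≤ v a)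
    (hvv' : ∀ a, v a ≤ v' a) (x : X) : (M *ᵥ v) x ≤ (M' *ᵥ v') x :=
  sum_le_sum fun b _ => mul_le_mul (hMM' x b) (hvv' b) (hv b) ((hM x b).trans (hMM' x b))

variable [DecidableEq X]

lemma pow_mulVec_apply_le_pow_mulVec_apply {M M' : Matrix X X ℝ} (hM : ∀ a b, 0 ≤ M a b)
    (hMM' : ∀ a b, M a b ≤ M' a b) {v v' : X → ℝ} (hv : ∀ a, 0 ≤ v a)
    (hvv' : ∀ a, v a ≤ v' a) (k : ℕ) (x : X) : (M ^ k *ᵥ v) x ≤ (M' ^ k *ᵥ v') x := by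
  induction k generalizing x with
  | zero => simpa using hvv' x
  | succ k ih =>
    rw [pow_succ', pow_succ', ← mulVec_mulVec, ← mulVec_mulVec]
    exact mulVec_apply_le_mulVec_apply hM hMM'
      (mulVec_apply_nonneg (pow_apply_nonneg hM k) hv) ih x

lemma pow_mulVec_eq_self_s14 {M : Matrix X X ℝ} {v : X → ℝ} (hv : M *ᵥ v = v) (k : ℕ) :
    M ^ k *ᵥ v = v := by
  induction k with
  | zero => simp
  | succ k ih => rw [pow_succ, ← mulVec_mulVec, hv, ih]

lemma pow_mulVec_apply_eq_sum_paths (M : Matrix X X ℝ) (v : X → ℝ) (k : ℕ) (x : X) :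
    (M ^ k *ᵥ v) x = ∑ w : Fin k → X,
      (∏ i : Fin k, M ((Fin.cons x w : Fin (k + 1) → X) i.castSucc)
          ((Fin.cons x w : Fin (k + 1) → X) i.succ)) *
        v ((Fin.cons x w : Fin (k + 1) → X) (Fin.last k)) := by
  induction k generalizing x with
  | zero => simp
  | succ k ih =>
    rw [pow_succ', ← mulVec_mulVec, mulVec, dotProduct]
    simp only [ih, Finset.mul_sum, ← Fintype.sum_prod_type']
    refine Fintype.sum_bijective
      (fun p : X × (Fin k → X) => (Fin.cons p.1 p.2 : Fin (k + 1) → X))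
      (Fin.consEquiv fun _ => X).bijective _ _ fun ⟨y, w⟩ => ?_
    simp only [Fin.prod_univ_succ, Fin.castSucc_zero, Fin.cons_zero, ← Fin.succ_castSucc,
      Fin.cons_succ, ← Fin.succ_last]
    ring

end nonneg

section taboo

variable {X : Type*} [DecidableEq X]

def taboo (M : Matrix X X ℝ) (s : X) : Matrix X X ℝ :=
  of fun a b => if b = s then 0 else M a b

lemma taboo_nonneg {M : Matrix X X ℝ} (s : X) (hM : ∀ a b, 0 ≤ M a b) (a b : X) :
    0 ≤ taboo M s a b := by
  by_cases hb : b = s <;> simp [taboo, hb, hM a b]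

lemma taboo_le_taboo {M M' : Matrix X X ℝ} (s : X) (hMM' : ∀ a b, M a b ≤ M' a b) (a b : X) :
    taboo M s a b ≤ taboo M' s a b := by
  by_cases hb : b = s <;> simp [taboo, hb, hMM' a b]

variable [Fintype X]

/-- For stochastic `M`, `firstHit M s k x` is the probability that the chain started at `x`
enters `s` for the first time at step `k + 1`. -/
def firstHit (M : Matrix X X ℝ) (s : X) (k : ℕ) : X → ℝ :=
  taboo M s ^ k *ᵥ fun a => M a s

variable {M M' : Matrix X X ℝ} (s : X)

lemma mulVec_apply_eq_add_taboo (v : X → ℝ) (x : X) :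
    (M *ᵥ v) x = M x s * v s + (taboo M s *ᵥ v) x := by
  simp only [mulVec, dotProduct, taboo, of_apply, ite_mul, zero_mul]
  rw [Finset.sum_ite, Finset.sum_const_zero, zero_add, Finset.filter_ne']
  exact (add_sum_erase univ (fun b => M x b * v b) (mem_univ s)).symm

lemma firstHit_nonneg (hM : ∀ a b, 0 ≤ M a b) (k : ℕ) (x : X) : 0 ≤ firstHit M s k x :=
  mulVec_apply_nonneg (pow_apply_nonneg (taboo_nonneg s hM) k) (fun a => hM a s) x

lemma firstHit_le_firstHit (hM : ∀ a b, 0 ≤ M a b) (hMM' : ∀ a b, M a b ≤ M' a b) (k : ℕ)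
    (x : X) : firstHit M s k x ≤ firstHit M' s k x :=
  pow_mulVec_apply_le_pow_mulVec_apply (taboo_nonneg s hM) (taboo_le_taboo s hMM')
    (fun a => hM a s) (fun a => hMM' a s) k x

lemma firstHit_succ (k : ℕ) : firstHit M s (k + 1) = taboo M s *ᵥ firstHit M s k := by
  rw [firstHit, pow_succ', ← mulVec_mulVec]
  rfl

lemma sum_range_succ_firstHit (n : ℕ) (x : X) :
    ∑ k ∈ range (n + 1), firstHit M s k x =
      M x s + (taboo M s *ᵥ fun a => ∑ k ∈ range n, firstHit M s k a) x := by
  rw [sum_range_succ', add_comm]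
  congr 1
  · simp [firstHit]
  · simp only [firstHit_succ, mulVec, dotProduct, Finset.mul_sum]
    exact Finset.sum_comm

lemma sum_range_firstHit_mul_le (hM : ∀ a b, 0 ≤ M a b) {h : X → ℝ} (hh : ∀ a, 0 ≤ h a)
    (hMh : ∀ a, (M *ᵥ h) a ≤ h a) (n : ℕ) (x : X) :
    (∑ k ∈ range n, firstHit M s k x) * h s ≤ h x := by
  induction n generalizing x with
  | zero => simpa using hh x
  | succ n ih =>
    calc (∑ k ∈ range (n + 1), firstHit M s k x) * h s
        = M x s * h s +
            (taboo M s *ᵥ fun a => (∑ k ∈ range n, firstHit M s k a) * h s) x := by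
          simp only [sum_range_succ_firstHit, add_mul, mulVec, dotProduct, Finset.sum_mul,
            mul_assoc]
      _ ≤ M x s * h s + (taboo M s *ᵥ h) x := by
          gcongr
          exact mulVec_apply_le_mulVec_apply (taboo_nonneg s hM) (fun _ _ => le_rfl)
            (fun a => mul_nonneg (sum_nonneg fun k _ => firstHit_nonneg s hM k a) (hh s)) ih x
      _ = (M *ᵥ h) x := (mulVec_apply_eq_add_taboo s h x).symm
      _ ≤ h x := hMh x

lemma pow_apply_le_sum_range_firstHit (hM : ∀ a b, 0 ≤ M a b) (hss : ∀ j, (M ^ j) s s ≤ 1)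
    (n : ℕ) (x : X) : (M ^ (n + 1)) x s ≤ ∑ k ∈ range (n + 1), firstHit M s k x := by
  induction n generalizing x with
  | zero => simp [firstHit]
  | succ n ih =>
    have hcol : (M ^ (n + 2)) x s = (M *ᵥ fun a => (M ^ (n + 1)) a s) x := by
      rw [pow_succ' M (n + 1)]; rfl
    rw [hcol, mulVec_apply_eq_add_taboo s, sum_range_succ_firstHit]
    gcongr
    · exact mul_le_of_le_one_right (hM x s) (hss _)
    · exact mulVec_apply_le_mulVec_apply (taboo_nonneg s hM) (fun _ _ => le_rfl)
        (fun a => pow_apply_nonneg hM _ a s) ih x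

end taboo

section tilt

variable {X : Type*}

noncomputable def tilt (g : X → ℝ) (P : Matrix X X ℝ) : Matrix X X ℝ :=
  of fun a b => Real.exp (g a) * P a b

variable {P : Matrix X X ℝ}

lemma tilt_nonneg (hP : ∀ a b, 0 ≤ P a b) (g : X → ℝ) (a b : X) : 0 ≤ tilt g P a b :=
  mul_nonneg (Real.exp_nonneg _) (hP a b)

lemma exp_smul_le_tilt (hP : ∀ a b, 0 ≤ P a b) {g : X → ℝ} {c : ℝ} (hg : ∀ a, c ≤ g a)
    (a b : X) : (Real.exp c • P) a b ≤ tilt g P a b :=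
  mul_le_mul_of_nonneg_right (Real.exp_le_exp.2 (hg a)) (hP a b)

variable [Fintype X]

lemma tilt_sub_const_mulVec {g h : X → ℝ} {c : ℝ} (heig : tilt g P *ᵥ h = Real.exp c • h) :
    tilt (fun a => g a - c) P *ᵥ h = h := by
  have htilt : tilt (fun a => g a - c) P = Real.exp (-c) • tilt g P := by
    ext a b
    simp only [tilt, of_apply, smul_apply, smul_eq_mul, sub_eq_neg_add, Real.exp_add]
    ring
  rw [htilt, smul_mulVec, heig, smul_smul, ← Real.exp_add, neg_add_cancel, Real.exp_zero,
    one_smul]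

variable [DecidableEq X]

lemma le_of_tilt_mulVec_eq_exp_smul [Nonempty X] (hP : P ∈ rowStochastic ℝ X)
    {g h : X → ℝ} (hh : ∀ a, 0 < h a) {c r : ℝ} (hg : ∀ a, g a ≤ c)
    (heig : tilt g P *ᵥ h = Real.exp r • h) : r ≤ c := by
  obtain ⟨y, hy⟩ := Finite.exists_max h
  suffices Real.exp r * h y ≤ Real.exp c * h y from
    Real.exp_le_exp.1 (le_of_mul_le_mul_right this (hh y))
  calc Real.exp r * h y = ∑ b, Real.exp (g y) * P y b * h b := by
        rw [← smul_eq_mul, ← Pi.smul_apply, ← heig]; rfl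
    _ ≤ ∑ b, Real.exp c * P y b * h y := by
        have hPy : ∀ b, 0 ≤ P y b := fun b => nonneg_of_mem_rowStochastic hP
        exact sum_le_sum fun b _ => mul_le_mul
          (mul_le_mul_of_nonneg_right (Real.exp_le_exp.2 (hg y)) (hPy b)) (hy b) (hh b).le
          (mul_nonneg (Real.exp_nonneg c) (hPy b))
    _ = Real.exp c * h y := by
        rw [← Finset.sum_mul, ← Finset.mul_sum, sum_row_of_mem_rowStochastic hP, mul_one]

theorem retE_exp_sum_eq_tsum_firstHit (P : Matrix X X ℝ) (g : X → ℝ) (s x : X) :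
    retE P s x (fun k p => Real.exp (∑ i : Fin (k + 1), g (p i.castSucc))) =
      ∑' k, firstHit (tilt g P) s k x := by
  refine tsum_congr fun k => ?_
  rw [firstHit, pow_mulVec_apply_eq_sum_paths]
  refine Finset.sum_congr rfl fun w _ => ?_
  split_ifs with hw
  · dsimp only
    rw [Real.exp_sum, ← prod_mul_distrib, Fin.prod_univ_castSucc]
    congr 1
    · refine Finset.prod_congr rfl fun i _ => ?_
      rw [Fin.succ_castSucc, Fin.snoc_castSucc, Fin.snoc_castSucc]
      simp only [Fin.cons_succ, taboo, tilt, of_apply, hw i, ↓reduceIte]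
      ring
    · simp only [Fin.snoc_castSucc, Fin.succ_last, Fin.snoc_last, tilt, of_apply]
      ring
  · simp only [not_forall, not_not] at hw
    obtain ⟨i, hi⟩ := hw
    refine (mul_eq_zero_of_left (prod_eq_zero (mem_univ i) ?_) _).symm
    simp [taboo, hi]

variable {g h : X → ℝ} {β δ : ℝ} {N : ℕ}

lemma exp_smul_pow (c : ℝ) (n : ℕ) : (Real.exp c • P) ^ n = Real.exp (n * c) • P ^ n := by
  rw [smul_pow, Real.exp_nat_mul]

lemma harnack_of_tilt_mulVec_eq_self (hP : P ∈ rowStochastic ℝ X) (hg : ∀ a, -β ≤ g a)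
    (hPN : ∀ a b, δ ≤ (P ^ N) a b) (hh : ∀ a, 0 < h a) (heig : tilt g P *ᵥ h = h)
    (x y : X) :
    δ * h x ≤ Real.exp (N * β) * h y := by
  have hPnn : ∀ a b, 0 ≤ P a b := fun _ _ => nonneg_of_mem_rowStochastic hP
  have key : Real.exp (N * -β) * (δ * h x) ≤ h y := calc
    Real.exp (N * -β) * (δ * h x) ≤ Real.exp (N * -β) * (P ^ N *ᵥ h) y := by
        gcongr
        exact (mul_le_mul_of_nonneg_right (hPN y x) (hh x).le).trans
          (single_le_sum (fun b _ => mul_nonneg (pow_apply_nonneg hPnn N y b) (hh b).le)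
            (mem_univ x))
    _ = ((Real.exp (-β) • P) ^ N *ᵥ h) y := by rw [exp_smul_pow, smul_mulVec]; rfl
    _ ≤ (tilt g P ^ N *ᵥ h) y :=
        pow_mulVec_apply_le_pow_mulVec_apply (fun a b => mul_nonneg (Real.exp_nonneg _) (hPnn a b))
          (exp_smul_le_tilt hPnn hg) (fun a => (hh a).le) (fun _ => le_rfl) N y
    _ = h y := by rw [pow_mulVec_eq_self_s14 heig]
  rwa [mul_neg, Real.exp_neg, inv_mul_le_iff₀ (Real.exp_pos _)] at key

lemma exp_mul_le_sum_range_firstHit_tilt (hP : P ∈ rowStochastic ℝ X) (hβ : 0 ≤ β)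
    (hg : ∀ a, -β ≤ g a) (hN : 0 < N) (hPN : ∀ a b, δ ≤ (P ^ N) a b) (s x : X) :
    Real.exp (-(N * β)) * δ ≤ ∑ k ∈ range N, firstHit (tilt g P) s k x := by
  have hPnn : ∀ a b, 0 ≤ P a b := fun _ _ => nonneg_of_mem_rowStochastic hP
  set Q := Real.exp (-β) • P
  have hQnn : ∀ a b, 0 ≤ Q a b := fun a b => mul_nonneg (Real.exp_nonneg _) (hPnn a b)
  have hQss (j : ℕ) : (Q ^ j) s s ≤ 1 := by
    rw [exp_smul_pow, smul_apply, smul_eq_mul]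
    exact mul_le_one₀ (Real.exp_le_one_iff.2 (by nlinarith [j.cast_nonneg (α := ℝ)]))
      (pow_apply_nonneg hPnn j s s) (le_one_of_mem_rowStochastic (pow_mem hP j))
  obtain ⟨n, rfl⟩ := Nat.exists_eq_add_one_of_ne_zero hN.ne'
  calc Real.exp (-((n + 1 : ℕ) * β)) * δ ≤ (Q ^ (n + 1)) x s := by
        rw [exp_smul_pow, smul_apply, smul_eq_mul, mul_neg]
        exact mul_le_mul_of_nonneg_left (hPN x s) (Real.exp_nonneg _)
    _ ≤ ∑ k ∈ range (n + 1), firstHit Q s k x :=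
        pow_apply_le_sum_range_firstHit s hQnn hQss n x
    _ ≤ ∑ k ∈ range (n + 1), firstHit (tilt g P) s k x :=
        sum_le_sum fun k _ => firstHit_le_firstHit s hQnn (exp_smul_le_tilt hPnn hg) k x

theorem retE_exp_sum_mem_Icc (hP : P ∈ rowStochastic ℝ X) (hβ : 0 ≤ β)
    (hg : ∀ a, -β ≤ g a) (hN : 0 < N) (hδ : 0 < δ) (hPN : ∀ a b, δ ≤ (P ^ N) a b)
    (hh : ∀ a, 0 < h a) (heig : tilt g P *ᵥ h = h) (s x : X) :
    retE P s x (fun k p => Real.exp (∑ i : Fin (k + 1), g (p i.castSucc))) ∈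
      Set.Icc (Real.exp (-(N * β)) * δ) (Real.exp (N * β) / δ) := by
  have hA : ∀ a b, 0 ≤ tilt g P a b := tilt_nonneg (fun _ _ => nonneg_of_mem_rowStochastic hP) g
  have hnn := firstHit_nonneg s hA
  have hpartial (n : ℕ) : ∑ k ∈ range n, firstHit (tilt g P) s k x ≤ h x / h s :=
    (le_div_iff₀ (hh s)).2 <| sum_range_firstHit_mul_le s hA (fun a => (hh a).le)
      (fun a => (congrFun heig a).le) n x
  have hratio : h x / h s ≤ Real.exp (N * β) / δ := by
    rw [div_le_div_iff₀ (hh s) hδ, mul_comm]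
    exact harnack_of_tilt_mulVec_eq_self hP hg hPN hh heig x s
  rw [retE_exp_sum_eq_tsum_firstHit]
  exact ⟨(exp_mul_le_sum_range_firstHit_tilt hP hβ hg hN hPN s x).trans
      ((summable_of_sum_range_le (hnn · x) hpartial).sum_le_tsum _ fun k _ => hnn k x),
    Real.tsum_le_of_sum_range_le (hnn · x) fun n => (hpartial n).trans hratio⟩

end tilt

section compact

variable {X : Type*} [Fintype X] [DecidableEq X] {K : Set (Matrix X X ℝ)}

lemma isCompact_of_subset_rowStochastic (hK : IsClosed K) (hst : K ⊆ rowStochastic ℝ X) :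
    IsCompact K := by
  refine (isCompact_univ_pi fun _ => isCompact_univ_pi fun _ =>
    isCompact_Icc (a := (0 : ℝ)) (b := 1)).of_isClosed_subset hK fun Q hQ => ?_
  simp only [Set.mem_univ_pi, Set.mem_Icc]
  exact fun a b => ⟨nonneg_of_mem_rowStochastic (hst hQ), le_one_of_mem_rowStochastic (hst hQ)⟩

lemma pow_add_apply_pos {Q : Matrix X X ℝ} (hQ : Q ∈ rowStochastic ℝ X) {n : ℕ}
    (hn : ∀ x y, 0 < (Q ^ n) x y) (m : ℕ) (x y : X) : 0 < (Q ^ (m + n)) x y := by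
  have hQm := pow_mem hQ m
  obtain ⟨z, hz⟩ : ∃ z, 0 < (Q ^ m) x z := by
    by_contra! h
    linarith [sum_row_of_mem_rowStochastic hQm x, sum_nonpos fun z (_ : z ∈ univ) => h z]
  rw [pow_add, mul_apply]
  exact sum_pos' (fun z _ => mul_nonneg (nonneg_of_mem_rowStochastic hQm) (hn z y).le)
    ⟨z, mem_univ z, mul_pos hz (hn z y)⟩

lemma isOpen_setOf_pow_apply_pos (n : ℕ) :
    IsOpen {M : Matrix X X ℝ | ∀ x y, 0 < (M ^ n) x y} := by
  simp only [Set.ofPred_forall]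
  exact isOpen_iInter_of_finite fun x => isOpen_iInter_of_finite fun y =>
    isOpen_lt continuous_const ((continuous_pow n).matrix_elem x y)

lemma exists_pow_apply_pos_of_isCompact (hK : IsCompact K)
    (hprim : ∀ Q ∈ K, Q ∈ rowStochastic ℝ X ∧ PrimitiveMat Q) :
    ∃ N, 0 < N ∧ ∀ Q ∈ K, ∀ x y, 0 < (Q ^ N) x y := by
  choose! n _ hpos using fun Q hQ => (hprim Q hQ).2
  obtain ⟨t, -, ht, hcover⟩ := hK.elim_finite_subcover_image
    (fun Q _ => isOpen_setOf_pow_apply_pos (n Q)) fun Q hQ => Set.mem_biUnion hQ (hpos Q hQ)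
  refine ⟨ht.toFinset.sup n + 1, Nat.succ_pos _, fun Q hQ => ?_⟩
  obtain ⟨R, hR, hQR⟩ := Set.mem_iUnion₂.1 (hcover hQ)
  obtain ⟨m, hm⟩ : ∃ m, ht.toFinset.sup n + 1 = m + n R :=
    Nat.exists_eq_add_of_le' (Nat.le_succ_of_le (le_sup (f := n) (ht.mem_toFinset.2 hR)))
  rw [hm]
  exact pow_add_apply_pos (hprim Q hQ).1 hQR m

lemma exists_le_pow_apply_of_isCompact (hK : IsCompact K) {N : ℕ}
    (hpos : ∀ Q ∈ K, ∀ x y, 0 < (Q ^ N) x y) :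
    ∃ δ, 0 < δ ∧ ∀ Q ∈ K, ∀ x y, δ ≤ (Q ^ N) x y := by
  have hT : IsCompact (⋃ p : X × X, (fun Q : Matrix X X ℝ => (Q ^ N) p.1 p.2) '' K) :=
    isCompact_iUnion fun p => hK.image ((continuous_pow N).matrix_elem p.1 p.2)
  obtain ⟨δ, hδ, hle⟩ := hT.exists_forall_le' continuousOn_id (a := 0) (by
    simp only [Set.mem_iUnion, Set.mem_image]
    rintro _ ⟨p, Q, hQ, rfl⟩
    exact hpos Q hQ p.1 p.2)
  exact ⟨δ, hδ, fun Q hQ x y => hle _ (Set.mem_iUnion.2 ⟨(x, y), Q, hQ, rfl⟩)⟩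

end compact

end Matrix

open Matrix in
theorem statement14_general {X : Type*} [Fintype X] [DecidableEq X] [Nonempty X] (l : ℕ)
    (P : (Fin l → ℝ) → Matrix X X ℝ) (C : (Fin l → ℝ) → X → ℝ)
    (α : ℝ) (hα : 0 < α) (xs : X)
    (hcl : ∀ Q ∈ closure (Set.range P), StochasticMat Q ∧ PrimitiveMat Q)
    (Clo Chi : ℝ) (hC : ∀ θ x, C θ x ∈ Set.Icc Clo Chi)
    (Λ : (Fin l → ℝ) → ℝ)
    (hΛ : ∀ θ, ∃ h : X → ℝ, (∀ x, 0 < h x) ∧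
      (Matrix.of fun x y => Real.exp (α * C θ x) * P θ x y) *ᵥ h = Real.exp (Λ θ) • h) :
    ∃ hlo hhi : ℝ, 0 < hlo ∧ hlo ≤ hhi ∧ ∀ θ x,
      retE (P θ) xs x
          (fun k p => Real.exp (∑ i : Fin (k + 1), (α * C θ (p i.castSucc) - Λ θ)))
        ∈ Set.Icc hlo hhi := by
  obtain ⟨z⟩ := ‹Nonempty X›
  have hK : ∀ Q ∈ closure (Set.range P), Q ∈ rowStochastic ℝ X ∧ PrimitiveMat Q :=
    fun Q hQ => ⟨mem_rowStochastic_iff_sum.2 (hcl Q hQ).1, (hcl Q hQ).2⟩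
  have hKc := isCompact_of_subset_rowStochastic isClosed_closure fun Q hQ => (hK Q hQ).1
  obtain ⟨N, hN, hpos⟩ := exists_pow_apply_pos_of_isCompact hKc hK
  obtain ⟨δ, hδ, hδle⟩ := exists_le_pow_apply_of_isCompact hKc hpos
  have hmem θ : P θ ∈ closure (Set.range P) := subset_closure (Set.mem_range_self θ)
  set β := α * (Chi - Clo)
  have hβ : 0 ≤ β := mul_nonneg hα.le (sub_nonneg.2 ((hC 0 z).1.trans (hC 0 z).2))
  have hbound : ∀ θ x, retE (P θ) xs x
      (fun k p => Real.exp (∑ i : Fin (k + 1), (α * C θ (p i.castSucc) - Λ θ))) ∈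
        Set.Icc (Real.exp (-(N * β)) * δ) (Real.exp (N * β) / δ) := by
    intro θ x
    obtain ⟨h, hh, heig⟩ := hΛ θ
    have hΛle : Λ θ ≤ α * Chi := le_of_tilt_mulVec_eq_exp_smul (hK _ (hmem θ)).1 hh
      (fun a => mul_le_mul_of_nonneg_left (hC θ a).2 hα.le) heig
    refine retE_exp_sum_mem_Icc (hK _ (hmem θ)).1 hβ (fun a => ?_) hN hδ (hδle _ (hmem θ)) hh
      (tilt_sub_const_mulVec heig) xs x
    nlinarith [(hC θ a).1]
  exact ⟨_, _, by positivity, (hbound 0 z).1.trans (hbound 0 z).2, hbound⟩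

/-- Suppose the closure of the family `{P_θ : θ ∈ ℝ^l}` consists of
irreducible aperiodic stochastic matrices (with common recurrent state `xs`), and the
costs `C_θ` are uniformly bounded in `[Clo, Chi]`. Then the relative value functions
`h_θ(x) = E^θ_x[exp (∑_{i=0}^{τ-1} (α C_θ(Φ_i) − Λ_θ))]` are uniformly bounded: there
exist `0 < hlo ≤ hhi < ∞` with `h_θ(x) ∈ [hlo, hhi]` for all `x` and `θ`.  Here `Λ_θ` is
the risk-sensitive cost, i.e. the log-Perron eigenvalue of `diag (e^{α C_θ}) P_θ`,
characterized by a strictly positive right eigenvector. -/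
theorem statement14 {X : Type*} [Fintype X] [DecidableEq X] [Nonempty X] (l : ℕ)
    (P : (Fin l → ℝ) → Matrix X X ℝ) (C : (Fin l → ℝ) → X → ℝ)
    (α : ℝ) (hα : 0 < α) (xs : X)
    (hstoch : ∀ θ, StochasticMat (P θ))
    (hcl : ∀ Q ∈ closure (Set.range P), StochasticMat Q ∧ PrimitiveMat Q)
    (Clo Chi : ℝ) (hC : ∀ θ x, C θ x ∈ Set.Icc Clo Chi)
    (Λ : (Fin l → ℝ) → ℝ)
    (hΛ : ∀ θ, ∃ h : X → ℝ, (∀ x, 0 < h x) ∧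
      (Matrix.of fun x y => Real.exp (α * C θ x) * P θ x y) *ᵥ h = Real.exp (Λ θ) • h) :
    ∃ hlo hhi : ℝ, 0 < hlo ∧ hlo ≤ hhi ∧ ∀ θ x,
      retE (P θ) xs x
          (fun k p => Real.exp (∑ i : Fin (k + 1), (α * C θ (p i.castSucc) - Λ θ)))
        ∈ Set.Icc hlo hhi :=
  statement14_general l P C α hα xs hcl Clo Chi hC Λ hΛ
end
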